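/- arXiv:2107.05156 — 8 statements merged into one kernel-verified Lean document; each statement's English description precedes it below -/
import Mathlib

section
/- Let p be a primitive polynomial of degree k ≥ 1 over 𝔽₂, let c be the m-sequence generated by p from any nonzero initial state, and let n ≥ k. Then the set W = {(c_j, c_{j+1}, …, c_{j+n−1}) : j ∈ ℕ} ∪ {(0,…,0)} of length-n windows of c together with the zero vector equals the set S = {v ∈ 𝔽₂^n : Σ_{i=0}^{k} p_i v_{m−i} = 0 for all k ≤ m ≤ n−1} of all length-n solutions of the recurrence; in particular, W is an 𝔽₂-linear subspace of 𝔽₂^n of dimension k (so |W| = 2^k). -/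
/-!
Let `K = 𝔽₂[x]/(p)`, let `β` be the class of `x` and `γ = β⁻¹`. For a nonzero 𝔽₂-linear
functional `L` on `K`, the map `a ↦ (j ↦ L (a γʲ))` sends `K` injectively into the solutions
of the recurrence (the recurrence at `m` reads `L (a γᵐ p(β)) = 0`). A solution is determined
by its first `k` terms, so the solution space has dimension at most `k = [K : 𝔽₂]` and this map
is an isomorphism. Since `β` is primitive, `γ` generates `Kˣ`; shifting a solution by `j`
multiplies `a` by `γʲ`, hence every nonzero solution is a shift of `c`. Finally, the
length-`n` solutions are exactly the restrictions of solutions, and restriction is injective.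
-/

/-- A polynomial `p` over 𝔽₂ is primitive of degree `k` if it is irreducible of degree `k`
and the residue class of `X` in `𝔽₂[x]/(p)` has multiplicative order `2^k - 1`. -/
def IsPrimitivePoly (k : ℕ) (p : Polynomial (ZMod 2)) : Prop :=
  p.natDegree = k ∧ Irreducible p ∧ orderOf (AdjoinRoot.root p) = 2 ^ k - 1

/-- The PR code `C(p, n)`: vectors `v ∈ 𝔽₂ⁿ` with `∑_{i=0}^{k} p_i v_{m-i} = 0`
for all `k ≤ m ≤ n - 1`. -/
def PRCode (k n : ℕ) (p : Polynomial (ZMod 2)) : Set (Fin n → ZMod 2) :=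
  {v | ∀ m : Fin n, k ≤ (m : ℕ) →
    ∑ i ∈ Finset.range (k + 1),
      p.coeff i * v ⟨(m : ℕ) - i, lt_of_le_of_lt (Nat.sub_le _ _) m.isLt⟩ = 0}

open Polynomial Finset Module

section Recurrence

variable {F : Type*} [Field F]

def recSolutions (k : ℕ) (p : F[X]) : Submodule F (ℕ → F) where
  carrier := {u | ∀ m, k ≤ m → ∑ i ∈ range (k + 1), p.coeff i * u (m - i) = 0}
  add_mem' {u v} hu hv m hm := by
    simp only [Pi.add_apply, mul_add, sum_add_distrib, hu m hm, hv m hm, add_zero]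
  zero_mem' m _ := by simp
  smul_mem' a u hu m hm := by
    simp only [Pi.smul_apply, smul_eq_mul, mul_left_comm _ a, ← mul_sum, hu m hm, mul_zero]

variable {k : ℕ} {p : F[X]}

theorem shift_mem_recSolutions {u : ℕ → F} (hu : u ∈ recSolutions k p) (j : ℕ) :
    (fun m ↦ u (j + m)) ∈ recSolutions k p := by
  intro m hm
  rw [← hu (j + m) (by omega)]
  refine sum_congr rfl fun i hi ↦ ?_
  rw [Nat.add_sub_assoc (by have := mem_range.mp hi; omega)]

theorem eqOn_of_recurrence (hp0 : p.coeff 0 ≠ 0) {N : ℕ} {s t : ℕ → F}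
    (hs : ∀ m, k ≤ m → m < N → ∑ i ∈ range (k + 1), p.coeff i * s (m - i) = 0)
    (ht : ∀ m, k ≤ m → m < N → ∑ i ∈ range (k + 1), p.coeff i * t (m - i) = 0)
    (hst : ∀ i < k, s i = t i) : ∀ m < N, s m = t m := by
  intro m
  induction m using Nat.strong_induction_on with
  | _ m ih =>
    intro hmN
    by_cases hmk : m < k
    · exact hst m hmk
    have hs' := hs m (by omega) hmN
    have ht' := ht m (by omega) hmN
    rw [sum_range_succ', Nat.sub_zero] at hs' ht'
    have htail : ∑ i ∈ range k, p.coeff (i + 1) * s (m - (i + 1)) =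
        ∑ i ∈ range k, p.coeff (i + 1) * t (m - (i + 1)) :=
      sum_congr rfl fun i hi ↦ by
        have := mem_range.mp hi
        rw [ih (m - (i + 1)) (by omega) (by omega)]
    exact mul_left_cancel₀ hp0 (by linear_combination hs' - ht' - htail)

variable (k p) in
def restrictRecSolutions (n : ℕ) : recSolutions k p →ₗ[F] (Fin n → F) :=
  (LinearMap.funLeft F F Fin.val).comp (recSolutions k p).subtype

@[simp]
theorem restrictRecSolutions_apply {n : ℕ} (u : recSolutions k p) (i : Fin n) :
    restrictRecSolutions k p n u i = (u : ℕ → F) i := rfl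

theorem restrictRecSolutions_injective (hp0 : p.coeff 0 ≠ 0) {n : ℕ} (hkn : k ≤ n) :
    Function.Injective (restrictRecSolutions k p n) := by
  intro u v huv
  ext m
  refine eqOn_of_recurrence hp0 (N := m + 1) (fun m hm _ ↦ u.2 m hm) (fun m hm _ ↦ v.2 m hm)
    (fun i hi ↦ congrFun huv ⟨i, by omega⟩) m (by omega)

theorem finiteDimensional_recSolutions (hp0 : p.coeff 0 ≠ 0) :
    FiniteDimensional F (recSolutions k p) :=
  Module.Finite.of_injective _ (restrictRecSolutions_injective hp0 le_rfl)

theorem finrank_recSolutions_le (hp0 : p.coeff 0 ≠ 0) : finrank F (recSolutions k p) ≤ k := by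
  simpa using LinearMap.finrank_le_finrank_of_injective (restrictRecSolutions_injective hp0 le_rfl)

theorem range_restrictRecSolutions_eq_windows {c : ℕ → F} (hc : c ∈ recSolutions k p)
    (hshift : ∀ u ∈ recSolutions k p, u ≠ 0 → ∃ j, ∀ m, u m = c (j + m)) (n : ℕ) :
    (LinearMap.range (restrictRecSolutions k p n) : Set (Fin n → F)) =
      {w | ∃ j : ℕ, ∀ i : Fin n, w i = c (j + i)} ∪ {0} := by
  ext w
  simp only [LinearMap.coe_range, Set.mem_range, Set.mem_union, Set.mem_ofPred_eq,
    Set.mem_singleton_iff]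
  constructor
  · rintro ⟨u, rfl⟩
    by_cases hu0 : (u : ℕ → F) = 0
    · right; ext i; simp [hu0]
    obtain ⟨j, hj⟩ := hshift u u.2 hu0
    exact Or.inl ⟨j, fun i ↦ hj i⟩
  · rintro (⟨j, hj⟩ | rfl)
    · exact ⟨⟨_, shift_mem_recSolutions hc j⟩, funext fun i ↦ (hj i).symm⟩
    · exact ⟨0, map_zero _⟩

end Recurrence

section Functional

variable {F K : Type*} [Field F] [Field K] [Algebra F K]

def seqOfFunctional (L : K →ₗ[F] F) (γ : K) : K →ₗ[F] (ℕ → F) :=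
  LinearMap.pi fun j ↦ L ∘ₗ LinearMap.mulRight F (γ ^ j)

@[simp]
theorem seqOfFunctional_apply (L : K →ₗ[F] F) (γ a : K) (j : ℕ) :
    seqOfFunctional L γ a j = L (a * γ ^ j) := rfl

variable {k : ℕ} {p : F[X]} {L : K →ₗ[F] F} {γ : K}

theorem seqOfFunctional_mem_recSolutions (hdeg : p.natDegree ≤ k) (hγ0 : γ ≠ 0)
    (hroot : aeval γ⁻¹ p = 0) (a : K) : seqOfFunctional L γ a ∈ recSolutions k p := by
  intro m hm
  have hpow : ∀ i ∈ range (k + 1), γ ^ (m - i) = γ ^ m * γ⁻¹ ^ i := fun i hi ↦ by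
    rw [pow_sub₀ γ hγ0 (by have := mem_range.mp hi; omega), inv_pow]
  calc ∑ i ∈ range (k + 1), p.coeff i * seqOfFunctional L γ a (m - i)
      = L (a * γ ^ m * ∑ i ∈ range (k + 1), p.coeff i • γ⁻¹ ^ i) := by
        simp only [seqOfFunctional_apply, mul_sum, map_sum]
        refine sum_congr rfl fun i hi ↦ ?_
        rw [hpow i hi, mul_smul_comm, map_smul, smul_eq_mul, mul_assoc]
    _ = 0 := by rw [← aeval_eq_sum_range' (by omega), hroot, mul_zero, map_zero]

theorem seqOfFunctional_injective (hL : L ≠ 0) (hgen : ∀ z : K, z ≠ 0 → ∃ j : ℕ, γ ^ j = z) :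
    Function.Injective (seqOfFunctional L γ) := by
  rw [← LinearMap.ker_eq_bot, Submodule.eq_bot_iff]
  intro a ha
  by_contra ha0
  apply hL
  ext z
  by_cases hz : z = 0
  · simp [hz]
  obtain ⟨j, hj⟩ := hgen (a⁻¹ * z) (by simp [ha0, hz])
  have := congrFun (LinearMap.mem_ker.mp ha) j
  rwa [seqOfFunctional_apply, hj, mul_inv_cancel_left₀ ha0] at this

theorem range_seqOfFunctional (hp0 : p.coeff 0 ≠ 0) (hdeg : p.natDegree ≤ k)
    (hK : finrank F K = k) (hroot : aeval γ⁻¹ p = 0)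
    (hgen : ∀ z : K, z ≠ 0 → ∃ j : ℕ, γ ^ j = z) (hL : L ≠ 0) :
    LinearMap.range (seqOfFunctional L γ) = recSolutions k p := by
  have hγ0 : γ ≠ 0 := by
    rintro rfl
    rw [inv_zero, ← coeff_zero_eq_aeval_zero', map_eq_zero] at hroot
    exact hp0 hroot
  have := finiteDimensional_recSolutions (k := k) hp0
  refine Submodule.eq_of_le_of_finrank_le ?_ ?_
  · rintro _ ⟨a, rfl⟩
    exact seqOfFunctional_mem_recSolutions hdeg hγ0 hroot a
  · rw [LinearMap.finrank_range_of_inj (seqOfFunctional_injective hL hgen), hK]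
    exact finrank_recSolutions_le hp0

theorem exists_functional_ne_zero : ∃ L : K →ₗ[F] F, L ≠ 0 := by
  obtain ⟨L, hL⟩ := Module.Projective.exists_dual_ne_zero F (one_ne_zero : (1 : K) ≠ 0)
  exact ⟨L, fun h ↦ hL (by simp [h])⟩

theorem finrank_recSolutions (hp0 : p.coeff 0 ≠ 0) (hdeg : p.natDegree ≤ k)
    (hK : finrank F K = k) (hroot : aeval γ⁻¹ p = 0)
    (hgen : ∀ z : K, z ≠ 0 → ∃ j : ℕ, γ ^ j = z) : finrank F (recSolutions k p) = k := by
  obtain ⟨L, hL⟩ := exists_functional_ne_zero (F := F) (K := K)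
  rw [← range_seqOfFunctional hp0 hdeg hK hroot hgen hL,
    LinearMap.finrank_range_of_inj (seqOfFunctional_injective hL hgen), hK]

theorem exists_shift_eq_of_mem_recSolutions (hp0 : p.coeff 0 ≠ 0) (hdeg : p.natDegree ≤ k)
    (hK : finrank F K = k) (hroot : aeval γ⁻¹ p = 0)
    (hgen : ∀ z : K, z ≠ 0 → ∃ j : ℕ, γ ^ j = z) {u c : ℕ → F}
    (hu : u ∈ recSolutions k p) (hu0 : u ≠ 0) (hc : c ∈ recSolutions k p) (hc0 : c ≠ 0) :
    ∃ j, ∀ m, u m = c (j + m) := by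
  obtain ⟨L, hL⟩ := exists_functional_ne_zero (F := F) (K := K)
  rw [← range_seqOfFunctional hp0 hdeg hK hroot hgen hL] at hu hc
  obtain ⟨a, rfl⟩ := hu
  obtain ⟨b, rfl⟩ := hc
  have ha : a ≠ 0 := by rintro rfl; exact hu0 (map_zero _)
  have hb : b ≠ 0 := by rintro rfl; exact hc0 (map_zero _)
  obtain ⟨j, hj⟩ := hgen (b⁻¹ * a) (by simp [ha, hb])
  refine ⟨j, fun m ↦ ?_⟩
  simp only [seqOfFunctional_apply, pow_add, ← mul_assoc, hj, mul_inv_cancel_left₀ hb]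

end Functional

theorem range_restrictRecSolutions_eq_PRCode {k n : ℕ} {p : (ZMod 2)[X]} (hp0 : p.coeff 0 ≠ 0)
    (hkn : k ≤ n) (hfin : finrank (ZMod 2) (recSolutions k p) = k) :
    (LinearMap.range (restrictRecSolutions k p n) : Set (Fin n → ZMod 2)) = PRCode k n p := by
  ext v
  constructor
  · rintro ⟨u, rfl⟩ m hm
    exact u.2 m hm
  · intro hv
    have := finiteDimensional_recSolutions (k := k) hp0
    have hsurj : Function.Surjective (restrictRecSolutions k p k) :=
      (LinearMap.injective_iff_surjective_of_finrank_eq_finrank (by rw [hfin, finrank_fin_fun])).mp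
        (restrictRecSolutions_injective hp0 le_rfl)
    obtain ⟨u, hu⟩ := hsurj fun i ↦ v (Fin.castLE hkn i)
    have hext : ∀ m (h : m < n), Function.extend Fin.val v 0 m = v ⟨m, h⟩ :=
      fun m h ↦ Fin.val_injective.extend_apply v 0 ⟨m, h⟩
    have hagree := eqOn_of_recurrence hp0 (N := n) (s := u) (t := Function.extend Fin.val v 0)
      (fun m hm _ ↦ u.2 m hm)
      (fun m hm hmn ↦ by
        rw [← hv ⟨m, hmn⟩ hm]
        exact sum_congr rfl fun i _ ↦ by rw [hext])
      (fun i hi ↦ by rw [hext i (by omega)]; exact congrFun hu ⟨i, hi⟩)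
    exact ⟨u, funext fun i ↦ by rw [restrictRecSolutions_apply, hagree i i.isLt, hext _ i.isLt]⟩

namespace IsPrimitivePoly

variable {k : ℕ} {p : (ZMod 2)[X]}

theorem finrank_adjoinRoot (hp : IsPrimitivePoly k p) :
    finrank (ZMod 2) (AdjoinRoot p) = k :=
  finrank_quotient_span_eq_natDegree.trans hp.1

theorem root_ne_zero [Fact (Irreducible p)] (hp : IsPrimitivePoly k p) (hk : 1 ≤ k) :
    AdjoinRoot.root p ≠ 0 := by
  intro h
  have := pow_orderOf_eq_one (AdjoinRoot.root p)
  rw [hp.2.2, h, zero_pow (Nat.sub_ne_zero_of_lt (Nat.one_lt_two_pow (by omega)))] at this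
  exact zero_ne_one this

theorem coeff_zero_ne_zero (hp : IsPrimitivePoly k p) (hk : 1 ≤ k) : p.coeff 0 ≠ 0 := by
  have := Fact.mk hp.2.1
  intro h0
  have hdvd : p ∣ X := irreducible_X.dvd_symm hp.2.1 (X_dvd_iff.mpr h0)
  exact hp.root_ne_zero hk (by rw [← AdjoinRoot.mk_X]; exact AdjoinRoot.mk_eq_zero.mpr hdvd)

theorem exists_pow_inv_root_eq [Fact (Irreducible p)] (hp : IsPrimitivePoly k p) (hk : 1 ≤ k)
    (z : AdjoinRoot p) (hz : z ≠ 0) : ∃ j : ℕ, (AdjoinRoot.root p)⁻¹ ^ j = z := by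
  have := Module.finite_of_finrank_pos (hp.finrank_adjoinRoot ▸ hk)
  have := Module.finite_of_finite (ZMod 2) (M := AdjoinRoot p)
  let := Fintype.ofFinite (AdjoinRoot p)
  have hcard : Fintype.card (AdjoinRoot p) = 2 ^ k := by
    rw [Module.card_eq_pow_finrank (K := ZMod 2), ZMod.card, hp.finrank_adjoinRoot]
  have hprim : IsPrimitiveRoot (AdjoinRoot.root p)⁻¹ (Fintype.card (AdjoinRoot p) - 1) := by
    rw [hcard, ← hp.2.2]
    exact (IsPrimitiveRoot.orderOf _).inv
  have : NeZero (Fintype.card (AdjoinRoot p) - 1) :=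
    ⟨by rw [hcard]; exact Nat.sub_ne_zero_of_lt (Nat.one_lt_two_pow (by omega))⟩
  obtain ⟨j, -, hj⟩ := hprim.eq_pow_of_pow_eq_one (FiniteField.pow_card_sub_one_eq_one z hz)
  exact ⟨j, hj⟩

end IsPrimitivePoly

/-- For a primitive `p` of degree `k ≥ 1`, an m-sequence `c` generated by `p`
from a nonzero initial state, and `n ≥ k`, the set of length-`n` windows of `c` together with
the zero vector equals the set of all length-`n` solutions of the recurrence (the PR code);
in particular it is an 𝔽₂-linear subspace of dimension `k`. -/
theorem stmt0 (k n : ℕ) (hk : 1 ≤ k) (hn : k ≤ n)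
    (p : Polynomial (ZMod 2)) (hp : IsPrimitivePoly k p)
    (c : ℕ → ZMod 2)
    (hrec : ∀ m, k ≤ m → ∑ i ∈ Finset.range (k + 1), p.coeff i * c (m - i) = 0)
    (hinit : ∃ i < k, c i ≠ 0) :
    ({w : Fin n → ZMod 2 | ∃ j : ℕ, ∀ i : Fin n, w i = c (j + i)} ∪ {0}
        = PRCode k n p) ∧
    ∃ W : Submodule (ZMod 2) (Fin n → ZMod 2),
      (W : Set (Fin n → ZMod 2))
          = {w : Fin n → ZMod 2 | ∃ j : ℕ, ∀ i : Fin n, w i = c (j + i)} ∪ {0} ∧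
      Module.finrank (ZMod 2) W = k := by
  have := Fact.mk hp.2.1
  have hp0 := hp.coeff_zero_ne_zero hk
  have hroot : aeval (AdjoinRoot.root p)⁻¹⁻¹ p = 0 := by
    rw [inv_inv, AdjoinRoot.aeval_eq, AdjoinRoot.mk_self]
  have hgen := hp.exists_pow_inv_root_eq hk
  have hfin := finrank_recSolutions hp0 hp.1.le hp.finrank_adjoinRoot hroot hgen
  have hc0 : c ≠ 0 := by
    obtain ⟨i, -, hi⟩ := hinit
    exact fun h ↦ hi (congrFun h i)
  have hwindows := range_restrictRecSolutions_eq_windows hrec (fun u hu hu0 ↦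
    exists_shift_eq_of_mem_recSolutions hp0 hp.1.le hp.finrank_adjoinRoot hroot hgen hu hu0
      hrec hc0) n
  refine ⟨hwindows.symm.trans (range_restrictRecSolutions_eq_PRCode hp0 hn hfin),
    LinearMap.range (restrictRecSolutions k p n), hwindows, ?_⟩
  rw [LinearMap.finrank_range_of_inj (restrictRecSolutions_injective hp0 hn), hfin]
end

section
/- Let p be a primitive polynomial of degree k ≥ 1 over 𝔽₂ and let c be the m-sequence generated by p from a nonzero initial state. Then c is periodic with least period exactly 2^k − 1: c_{m + 2^k − 1} = c_m for all m ∈ ℕ, and for every integer T with 0 < T < 2^k − 1 there exists m ∈ ℕ with c_{m+T} ≠ c_m. -/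
open Polynomial

def SatisfiesRecurrence {R : Type*} [Semiring R] (k : ℕ) (p : R[X]) (c : ℕ → R) : Prop :=
  ∀ m, k ≤ m → ∑ i ∈ Finset.range (k + 1), p.coeff i * c (m - i) = 0

namespace SatisfiesRecurrence

variable {R : Type*} [Ring R] {k : ℕ} {p : R[X]} {c d : ℕ → R}

theorem sub (hc : SatisfiesRecurrence k p c) (hd : SatisfiesRecurrence k p d) :
    SatisfiesRecurrence k p (c - d) := fun m hm => by
  simp only [Pi.sub_apply, mul_sub, Finset.sum_sub_distrib, hc m hm, hd m hm, sub_self]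

/-- With `p_0 ≠ 0` the recurrence determines `c_m` from `c_{m-k}, …, c_{m-1}`. -/
theorem eq_zero_of_forall_lt [NoZeroDivisors R] (h0 : p.coeff 0 ≠ 0)
    (hc : SatisfiesRecurrence k p c) (hinit : ∀ i < k, c i = 0) : c = 0 := by
  funext m
  induction m using Nat.strong_induction_on with
  | _ m ih =>
    rcases lt_or_ge m k with hm | hm
    · exact hinit m hm
    have hrec := hc m hm
    rw [Finset.sum_range_succ'] at hrec
    have hprev : ∀ i ∈ Finset.range k, p.coeff (i + 1) * c (m - (i + 1)) = 0 := fun i hi => by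
      rw [ih _ (by simp only [Finset.mem_range] at hi; omega), Pi.zero_apply, mul_zero]
    rw [Finset.sum_eq_zero hprev, zero_add, Nat.sub_zero] at hrec
    exact (mul_eq_zero.mp hrec).resolve_left h0

end SatisfiesRecurrence

theorem satisfiesRecurrence_inv_pow {F K : Type*} [CommRing F] [Field K] [Algebra F K]
    {p : F[X]} {α : K} (hα : α ≠ 0) (hroot : aeval α p = 0) (f : K →ₗ[F] F) :
    SatisfiesRecurrence p.natDegree p (fun m => f (α⁻¹ ^ m)) := fun m hm => by
  have hpow : ∀ i ∈ Finset.range (p.natDegree + 1),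
      p.coeff i • α⁻¹ ^ (m - i) = α⁻¹ ^ m * (p.coeff i • α ^ i) := fun i hi => by
    rw [pow_sub₀ _ (inv_ne_zero hα) (by simp only [Finset.mem_range] at hi; omega), inv_pow α i,
      inv_inv, mul_smul_comm]
  calc ∑ i ∈ Finset.range (p.natDegree + 1), p.coeff i * f (α⁻¹ ^ (m - i))
      = f (∑ i ∈ Finset.range (p.natDegree + 1), p.coeff i • α⁻¹ ^ (m - i)) := by
        simp only [map_sum, map_smul, smul_eq_mul]
    _ = f (α⁻¹ ^ m * aeval α p) := by
        rw [Finset.sum_congr rfl hpow, ← Finset.mul_sum, aeval_eq_sum_range]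
    _ = 0 := by rw [hroot, mul_zero, map_zero]

namespace PowerBasis

variable {F K : Type*} [Field F] [Field K] [Algebra F K]

noncomputable def inv (B : PowerBasis F K) : PowerBasis F K :=
  ofAdjoinEqTop B.isIntegral_gen.inv <| top_le_iff.mp <| B.adjoin_gen_eq_top ▸
    Algebra.adjoin_le (Set.singleton_subset_iff.mpr
      (B.isIntegral_gen.mem_of_inv_mem (Algebra.subset_adjoin rfl)))

@[simp]
theorem inv_gen (B : PowerBasis F K) : B.inv.gen = B.gen⁻¹ := rfl

@[simp]
theorem inv_dim (B : PowerBasis F K) : B.inv.dim = B.dim := by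
  rw [← B.inv.finrank, B.finrank]

theorem exists_linearMap_eq_inv_pow_of_satisfiesRecurrence (B : PowerBasis F K) {p : F[X]}
    (hroot : aeval B.gen p = 0) (hdim : B.dim = p.natDegree) (h0 : p.coeff 0 ≠ 0)
    {c : ℕ → F} (hc : SatisfiesRecurrence p.natDegree p c) :
    ∃ f : K →ₗ[F] F, ∀ m, c m = f (B.gen⁻¹ ^ m) := by
  have hgen : B.gen ≠ 0 := fun h => h0 <| (FaithfulSMul.algebraMap_eq_zero_iff F K).mp <| by
    rw [coeff_zero_eq_aeval_zero']
    rwa [h] at hroot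
  let f := B.inv.basis.constr F fun j => c j
  have hinit : ∀ j < p.natDegree, f (B.gen⁻¹ ^ j) = c j := fun j hj => by
    have hj' : j < B.inv.dim := by rw [inv_dim, hdim]; exact hj
    simpa only [f, B.inv.basis_eq_pow ⟨j, hj'⟩, inv_gen] using
      B.inv.basis.constr_basis F (fun j => c j) ⟨j, hj'⟩
  refine ⟨f, fun m => sub_eq_zero.mp <| congrFun (SatisfiesRecurrence.eq_zero_of_forall_lt h0
    (hc.sub (satisfiesRecurrence_inv_pow hgen hroot f)) fun i hi => ?_) m⟩
  rw [Pi.sub_apply, hinit i hi, sub_self]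

theorem gen_pow_eq_one_of_periodic (B : PowerBasis F K) {f : K →ₗ[F] F} (hf : f ≠ 0) {T : ℕ}
    (hT : Function.Periodic (fun m => f (B.gen ^ m)) T) : B.gen ^ T = 1 := by
  by_contra hne
  have hy : B.gen ^ T - 1 ≠ 0 := sub_ne_zero.mpr hne
  have hvanish : f ∘ₗ LinearMap.mulRight F (B.gen ^ T - 1) = 0 := B.basis.ext fun j => by
    rw [LinearMap.comp_apply, LinearMap.mulRight_apply, B.basis_eq_pow, mul_sub, mul_one,
      ← pow_add, map_sub, LinearMap.zero_apply, sub_eq_zero]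
    exact hT j
  refine hf (LinearMap.ext fun x => ?_)
  simpa [mul_assoc, inv_mul_cancel₀ hy] using
    LinearMap.congr_fun hvanish (x * (B.gen ^ T - 1)⁻¹)

end PowerBasis

/-- An m-sequence generated by a primitive polynomial of degree `k ≥ 1` from a
nonzero initial state is periodic with least period exactly `2^k - 1`. -/
theorem stmt2 (k : ℕ) (hk : 1 ≤ k)
    (p : Polynomial (ZMod 2)) (hp : IsPrimitivePoly k p)
    (c : ℕ → ZMod 2)
    (hrec : ∀ m, k ≤ m → ∑ i ∈ Finset.range (k + 1), p.coeff i * c (m - i) = 0)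
    (hinit : ∃ i < k, c i ≠ 0) :
    (∀ m : ℕ, c (m + (2 ^ k - 1)) = c m) ∧
    (∀ T : ℕ, 0 < T → T < 2 ^ k - 1 → ∃ m : ℕ, c (m + T) ≠ c m) := by
  obtain ⟨rfl, hirr, hord⟩ := hp
  have : Fact (Irreducible p) := ⟨hirr⟩
  let B := AdjoinRoot.powerBasis hirr.ne_zero
  have hα : B.gen ^ (2 ^ p.natDegree - 1) = 1 := hord ▸ pow_orderOf_eq_one _
  have hα0 : B.gen ≠ 0 := fun h => by
    rw [AdjoinRoot.powerBasis_gen] at h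
    rw [h, orderOf_zero] at hord
    have := Nat.one_lt_two_pow (n := p.natDegree) (by omega)
    omega
  have h0 : p.coeff 0 ≠ 0 := by
    have := minpoly.coeff_zero_ne_zero B.isIntegral_gen hα0
    rw [AdjoinRoot.powerBasis_gen, AdjoinRoot.minpoly_root hirr.ne_zero, coeff_mul_C] at this
    exact left_ne_zero_of_mul this
  obtain ⟨f, hf⟩ := B.exists_linearMap_eq_inv_pow_of_satisfiesRecurrence
    (by rw [AdjoinRoot.powerBasis_gen, AdjoinRoot.aeval_eq, AdjoinRoot.mk_self]) rfl h0 hrec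
  have hf0 : f ≠ 0 := fun h => by
    obtain ⟨i, -, hi⟩ := hinit
    exact hi (by rw [hf, h, LinearMap.zero_apply])
  refine ⟨fun m => ?_, fun T hT hTN => ?_⟩
  · rw [hf, hf, pow_add, inv_pow B.gen (2 ^ p.natDegree - 1), hα, inv_one, mul_one]
  · by_contra! hper
    have hT1 := B.inv.gen_pow_eq_one_of_periodic hf0 fun m => by
      simpa only [PowerBasis.inv_gen, ← hf] using hper m
    rw [PowerBasis.inv_gen, inv_pow, inv_eq_one, AdjoinRoot.powerBasis_gen] at hT1
    have := Nat.le_of_dvd hT (hord ▸ orderOf_dvd_of_pow_eq_one hT1)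
    omega
end

section
/- Let p be a primitive polynomial of degree k ≥ 1 over 𝔽₂ and take n = 2^k − 1. Then every nonzero codeword v of the PR code C(p, n) has Hamming weight exactly 2^{k−1}; that is, the PR code of length 2^k − 1 is a simplex code. -/
/-!
In the field `F = 𝔽₂[x]/(p)` with root `α`, every `𝔽₂`-linear functional `L` gives the codeword
`(L (α⁻¹ ^ j))_j`, since `α⁻¹ ^ (m - i) = α⁻¹ ^ m * α ^ i` turns the defining sums into
`L (α⁻¹ ^ m * p(α)) = 0`. A codeword is determined by its first `k` entries and these can be
prescribed freely through `L`, so every codeword is of this form. As `α` has order `2 ^ k - 1`, the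
powers `α⁻¹ ^ j` with `j < 2 ^ k - 1` enumerate `F ∖ {0}`, so the weight of the codeword is the
number of `x ∈ F` with `L x ≠ 0`: half of `|F| = 2 ^ k`, because translating by a `c` with
`L c = 1` swaps the kernel of `L` and its complement.
-/

open Polynomial Finset

theorem card_filter_ne_zero_mul_two {G F : Type*} [AddGroup G] [Fintype G]
    [FunLike F G (ZMod 2)] [AddMonoidHomClass F G (ZMod 2)] (f : F) {c : G} (hc : f c ≠ 0) :
    #{x | f x ≠ 0} * 2 = Fintype.card G := by
  have hshift : #{x | f x = 0} = #{x | f x ≠ 0} := by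
    refine card_equiv (Equiv.addRight c) fun x => ?_
    simp only [mem_filter, mem_univ, true_and, Equiv.coe_addRight, map_add]
    generalize f x = a
    generalize f c = b at hc
    revert a b; decide
  have := card_filter_add_card_filter_not (s := univ) (fun x => f x = 0)
  rw [card_univ] at this
  simp only [ne_eq] at hshift ⊢
  omega

theorem card_filter_comp_of_injective_of_card_eq_succ {α β : Type*} [Fintype α] [Fintype β]
    [DecidableEq β] {f : α → β} (hf : Function.Injective f) {b₀ : β} (hb₀ : ∀ a, f a ≠ b₀)
    (hcard : Fintype.card β = Fintype.card α + 1) (P : β → Prop) [DecidablePred P]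
    (hP : ¬ P b₀) : #{a | P (f a)} = #{b | P b} := by
  have hrange : univ.image f = univ.erase b₀ := by
    refine eq_of_subset_of_card_le (fun b hb => ?_) ?_
    · obtain ⟨a, -, rfl⟩ := mem_image.mp hb
      exact mem_erase.mpr ⟨hb₀ a, mem_univ _⟩
    · rw [card_image_of_injective _ hf, card_erase_of_mem (mem_univ _), card_univ, card_univ,
        hcard, Nat.add_sub_cancel]
  rw [← card_image_of_injective _ hf, ← filter_image, hrange, filter_erase,
    erase_eq_of_notMem (by simpa using hP)]

theorem PowerBasis.exists_linearMap_apply_inv_pow_eq {K F : Type*} [Field K] [Field F]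
    [Algebra K F] (pb : PowerBasis K F) (hgen : pb.gen ≠ 0) (c : Fin pb.dim → K) :
    ∃ L : F →ₗ[K] K, ∀ j : Fin pb.dim, L (pb.gen⁻¹ ^ (j : ℕ)) = c j := by
  refine ⟨(pb.basis.constr K (c ∘ Fin.rev)) ∘ₗ LinearMap.mulLeft K (pb.gen ^ (pb.dim - 1)),
    fun j => ?_⟩
  have : pb.gen ^ (pb.dim - 1) * pb.gen⁻¹ ^ (j : ℕ) = pb.basis j.rev := by
    rw [pb.basis_eq_pow, Fin.val_rev, inv_pow, ← pow_sub₀ _ hgen (by omega)]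
    congr 1; omega
  rw [LinearMap.comp_apply, LinearMap.mulLeft_apply, this, Module.Basis.constr_basis,
    Function.comp_apply, Fin.rev_rev]

theorem injective_inv_pow_of_orderOf_eq {M : Type*} [DivisionMonoid M] {x : M} {n : ℕ}
    (hx : orderOf x = n) : Function.Injective fun j : Fin n => x⁻¹ ^ (j : ℕ) := by
  subst hx
  intro i j hij
  simp only [inv_pow, inv_inj] at hij
  exact Fin.ext (pow_injOn_Iio_orderOf i.isLt j.isLt hij)

namespace PRCode

variable {k n : ℕ} {p : Polynomial (ZMod 2)}

theorem eq_of_forall_val_lt {v w : Fin n → ZMod 2} (hv : v ∈ PRCode k n p)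
    (hw : w ∈ PRCode k n p) (hp : p.coeff 0 ≠ 0) (hvw : ∀ j : Fin n, (j : ℕ) < k → v j = w j) : v = w := by
  funext ⟨j, hj⟩
  induction j using Nat.strong_induction_on with
  | _ j ih =>
  rcases lt_or_ge j k with hjk | hjk
  · exact hvw _ hjk
  have hrec := (hv ⟨j, hj⟩ hjk).trans (hw ⟨j, hj⟩ hjk).symm
  rw [sum_range_succ', sum_range_succ'] at hrec
  have htail : ∀ i ∈ range k, p.coeff (i + 1) * v ⟨j - (i + 1), by omega⟩
      = p.coeff (i + 1) * w ⟨j - (i + 1), by omega⟩ := fun i hi => by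
    rw [ih (j - (i + 1)) (by simp at hi; omega)]
  rw [sum_congr rfl htail, add_left_cancel_iff] at hrec
  exact mul_left_cancel₀ hp hrec

theorem linearMap_inv_pow_mem {F : Type*} [Field F] [Algebra (ZMod 2) F] {α : F} (hα : α ≠ 0)
    (hroot : aeval α p = 0) (hdeg : p.natDegree ≤ k) (L : F →ₗ[ZMod 2] ZMod 2) :
    (fun j : Fin n => L (α⁻¹ ^ (j : ℕ))) ∈ PRCode k n p := by
  intro m hm
  have hpow : ∀ i ∈ range (k + 1), p.coeff i * L (α⁻¹ ^ ((m : ℕ) - i))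
      = L (α⁻¹ ^ (m : ℕ) * (p.coeff i • α ^ i)) := fun i hi => by
    rw [pow_sub₀ _ (inv_ne_zero hα) (by simp at hi; omega), mul_smul_comm, map_smul, smul_eq_mul]
    simp only [inv_pow, inv_inv]
  rw [sum_congr rfl hpow, ← map_sum, ← mul_sum, ← aeval_eq_sum_range' (by omega), hroot,
    mul_zero, map_zero]

theorem exists_linearMap_eq_inv_pow {F : Type*} [Field F] [Algebra (ZMod 2) F]
    (pb : PowerBasis (ZMod 2) F) (hgen : pb.gen ≠ 0) (hroot : aeval pb.gen p = 0)
    (hdeg : p.natDegree ≤ k) (hcoeff : p.coeff 0 ≠ 0) (hdim : k ≤ pb.dim) {v : Fin n → ZMod 2}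
    (hv : v ∈ PRCode k n p) :
    ∃ L : F →ₗ[ZMod 2] ZMod 2, v = fun j : Fin n => L (pb.gen⁻¹ ^ (j : ℕ)) := by
  obtain ⟨L, hL⟩ := pb.exists_linearMap_apply_inv_pow_eq hgen
    fun j => if h : (j : ℕ) < n then v ⟨j, h⟩ else 0
  refine ⟨L, eq_of_forall_val_lt hv (linearMap_inv_pow_mem hgen hroot hdeg L) hcoeff
    fun j hj => ?_⟩
  rw [hL ⟨j, by omega⟩, dif_pos j.isLt]

end PRCode

theorem stmt3_general (k : ℕ)
    (p : Polynomial (ZMod 2)) (hp : IsPrimitivePoly k p) :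
    ∀ v ∈ PRCode k (2 ^ k - 1) p, v ≠ 0 → hammingNorm v = 2 ^ (k - 1) := by
  intro v hv hv0
  obtain ⟨hdeg, hirr, hord⟩ := hp
  have : Fact (Irreducible p) := ⟨hirr⟩
  obtain ⟨k, rfl⟩ : ∃ k', k = k' + 1 := Nat.exists_eq_add_one.mpr (hdeg ▸ hirr.natDegree_pos)
  set pb := AdjoinRoot.powerBasis hirr.ne_zero
  have hgen : pb.gen = AdjoinRoot.root p := AdjoinRoot.powerBasis_gen _
  have hdim : pb.dim = k + 1 := (AdjoinRoot.powerBasis_dim _).trans hdeg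
  have hα : pb.gen ≠ 0 := by
    have : 0 < orderOf pb.gen := hgen ▸ hord ▸ Nat.sub_pos_of_lt (Nat.one_lt_two_pow (by omega))
    exact (orderOf_pos_iff.mp this).isUnit.ne_zero
  have hcoeff : p.coeff 0 ≠ 0 := by
    have h := minpoly.coeff_zero_ne_zero (AdjoinRoot.isIntegral_root hirr.ne_zero) (hgen ▸ hα)
    rw [AdjoinRoot.minpoly_root hirr.ne_zero, coeff_mul_C] at h
    exact left_ne_zero_of_mul h
  obtain ⟨L, rfl⟩ := PRCode.exists_linearMap_eq_inv_pow pb hα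
    (hgen ▸ (AdjoinRoot.aeval_eq p).trans AdjoinRoot.mk_self) hdeg.le hcoeff hdim.ge hv
  have : Fintype (AdjoinRoot p) := Fintype.ofEquiv _ pb.basis.equivFun.toEquiv.symm
  have hcard : Fintype.card (AdjoinRoot p) = 2 ^ (k + 1) := by
    rw [Module.card_fintype pb.basis, ZMod.card, Fintype.card_fin, hdim]
  obtain ⟨j, hj⟩ := Function.ne_iff.mp hv0
  have hhalf := card_filter_ne_zero_mul_two L hj
  rw [hcard, pow_succ] at hhalf
  rw [hammingNorm, card_filter_comp_of_injective_of_card_eq_succ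
    (injective_inv_pow_of_orderOf_eq (hgen ▸ hord)) (fun j => pow_ne_zero _ (inv_ne_zero hα))
    (by simp [hcard, Nat.one_le_two_pow]) (fun x => L x ≠ 0) (by simp), Nat.add_sub_cancel]
  omega

/-- For `n = 2^k - 1`, every nonzero codeword of the PR code `C(p, n)` has
Hamming weight exactly `2^(k-1)` (the PR code of full length is a simplex code). -/
theorem stmt3 (k : ℕ) (hk : 1 ≤ k)
    (p : Polynomial (ZMod 2)) (hp : IsPrimitivePoly k p) :
    ∀ v ∈ PRCode k (2 ^ k - 1) p, v ≠ 0 → hammingNorm v = 2 ^ (k - 1) :=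
  stmt3_general k p hp
end

section
/- (Lemma 1) Let p₁ and p₂ be two distinct primitive polynomials of degree k over 𝔽₂ and let n ≥ 2k. Then the PR codes C(p₁, n) and C(p₂, n) have no nonzero codeword in common: C(p₁, n) ∩ C(p₂, n) = {(0,…,0)}. -/
open Polynomial Finset

/-!
Identify a word `v` with the polynomial `V = ∑ vⱼ Xʲ` of degree `< n`. Then `v ∈ C(p, n)` says
exactly that `p V ≡ g (mod Xⁿ)` for some `g` of degree `< k`. If `p V ≡ g₁` and `q V ≡ g₂`, then
`q g₁ ≡ p q V ≡ p g₂ (mod Xⁿ)`, and both sides have degree `< 2k ≤ n`, so `q g₁ = p g₂`. Distinct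
irreducible polynomials over 𝔽₂ are monic, hence coprime, so `p ∣ g₁` and `g₁ = 0` by degree;
likewise `g₂ = 0`. Thus `Xⁿ` divides `p V` and `q V`, hence `V` by Bézout, and `V = 0`.
-/

namespace Polynomial

section CommRing

variable {R : Type*} [CommRing R]

theorem exists_degree_lt_X_pow_dvd_sub {f : R[X]} {k n : ℕ}
    (hf : ∀ m, k ≤ m → m < n → f.coeff m = 0) : ∃ g : R[X], g.degree < k ∧ X ^ n ∣ f - g := by
  classical
  refine ⟨ofFn k fun i => f.coeff i, ofFn_degree_lt _, X_pow_dvd_iff.2 fun m hm => ?_⟩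
  rw [coeff_sub, sub_eq_zero]
  by_cases hmk : m < k
  · rw [ofFn_coeff_eq_val_of_lt _ hmk]
  · rw [ofFn_coeff_eq_zero_of_ge _ (not_lt.1 hmk), hf m (not_lt.1 hmk) hm]

theorem degree_mul_lt_of_natDegree_eq {q g : R[X]} {k n : ℕ} (hq : q.natDegree = k)
    (hg : g.degree < k) (hn : 2 * k ≤ n) : (q * g).degree < n :=
  calc (q * g).degree ≤ q.degree + g.degree := degree_mul_le q g
    _ ≤ k + g.degree := add_le_add_left (hq ▸ degree_le_natDegree) _
    _ < k + k := WithBot.add_lt_add_left WithBot.coe_ne_bot hg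
    _ ≤ n := by exact_mod_cast (by omega : k + k ≤ n)

variable [IsDomain R]

theorem eq_zero_of_X_pow_dvd_of_degree_lt {f : R[X]} {n : ℕ} (h : X ^ n ∣ f)
    (hf : f.degree < n) : f = 0 :=
  eq_zero_of_dvd_of_degree_lt h (by rwa [degree_X_pow])

theorem eq_zero_of_dvd_of_degree_lt_natDegree {p g : R[X]} (h : p ∣ g)
    (hg : g.degree < p.natDegree) : g = 0 := by
  by_contra hg0
  exact hg0 (eq_zero_of_dvd_of_natDegree_lt h ((natDegree_lt_iff_degree_lt hg0).2 hg))

theorem eq_zero_of_isCoprime_of_coeff_mul_eq_zero {p q V : R[X]} {k n : ℕ}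
    (hpq : IsCoprime p q) (hp : p.natDegree = k) (hq : q.natDegree = k) (hn : 2 * k ≤ n)
    (hV : V.degree < n) (hpV : ∀ m, k ≤ m → m < n → (p * V).coeff m = 0)
    (hqV : ∀ m, k ≤ m → m < n → (q * V).coeff m = 0) : V = 0 := by
  obtain ⟨g, hg, hpg⟩ := exists_degree_lt_X_pow_dvd_sub hpV
  obtain ⟨h, hh, hqh⟩ := exists_degree_lt_X_pow_dvd_sub hqV
  have hqg : q * g = p * h := by
    have hdvd : X ^ n ∣ q * g - p * h := by
      have hsplit : q * g - p * h = p * (q * V - h) - q * (p * V - g) := by ring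
      rw [hsplit]
      exact dvd_sub (dvd_mul_of_dvd_right hqh _) (dvd_mul_of_dvd_right hpg _)
    refine sub_eq_zero.1 (eq_zero_of_X_pow_dvd_of_degree_lt hdvd ?_)
    exact (degree_sub_le _ _).trans_lt
      (max_lt (degree_mul_lt_of_natDegree_eq hq hg hn) (degree_mul_lt_of_natDegree_eq hp hh hn))
  have hg0 : g = 0 := eq_zero_of_dvd_of_degree_lt_natDegree
    (hpq.dvd_of_dvd_mul_left (hqg ▸ dvd_mul_right p h)) (hp ▸ hg)
  have hh0 : h = 0 := eq_zero_of_dvd_of_degree_lt_natDegree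
    (hpq.symm.dvd_of_dvd_mul_left (hqg ▸ dvd_mul_right q g)) (hq ▸ hh)
  subst hg0 hh0
  rw [sub_zero] at hpg hqh
  obtain ⟨a, b, hab⟩ := hpq
  refine eq_zero_of_X_pow_dvd_of_degree_lt ?_ hV
  have hbezout : V = a * (p * V) + b * (q * V) := by
    linear_combination (-V) * hab
  rw [hbezout]
  exact dvd_add (dvd_mul_of_dvd_right hpg _) (dvd_mul_of_dvd_right hqh _)

end CommRing

theorem coeff_mul_ofFn {R : Type*} [Semiring R] [DecidableEq R] {p : R[X]} {k n m : ℕ}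
    (hp : p.natDegree ≤ k) (hkm : k ≤ m) (hm : m < n) (v : Fin n → R) :
    (p * ofFn n v).coeff m = ∑ i ∈ range (k + 1), p.coeff i * v ⟨m - i, by omega⟩ := by
  rw [coeff_mul, Nat.sum_antidiagonal_eq_sum_range_succ_mk]
  refine (sum_subset (range_subset_range.2 (by omega)) fun i _ hi => ?_).symm.trans
    (sum_congr rfl fun i _ => ?_)
  · rw [coeff_eq_zero_of_natDegree_lt (by rw [mem_range, not_lt] at hi; omega), zero_mul]
  · rw [ofFn_coeff_eq_val_of_lt _ (by omega)]

end Polynomial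

theorem mem_PRCode_iff {k n : ℕ} {p : (ZMod 2)[X]} (hp : p.natDegree ≤ k) {v : Fin n → ZMod 2} :
    v ∈ PRCode k n p ↔ ∀ m, k ≤ m → m < n → (p * ofFn n v).coeff m = 0 := by
  refine ⟨fun hv m hkm hm => ?_, fun hv m hkm => ?_⟩
  · rw [coeff_mul_ofFn hp hkm hm]
    exact hv ⟨m, hm⟩ hkm
  · rw [← coeff_mul_ofFn hp hkm m.isLt]
    exact hv m hkm m.isLt

theorem isCoprime_of_irreducible_of_ne {p q : (ZMod 2)[X]} (hp : Irreducible p)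
    (hq : Irreducible q) (hne : p ≠ q) : IsCoprime p q := by
  have monic : ∀ r : (ZMod 2)[X], r ≠ 0 → r.Monic := fun r hr => by
    have hc := leadingCoeff_ne_zero.2 hr
    show r.leadingCoeff = 1
    generalize r.leadingCoeff = c at hc ⊢
    revert c
    decide
  rw [hp.coprime_iff_not_dvd]
  exact fun hdvd => hne (eq_of_monic_of_associated (monic p hp.ne_zero) (monic q hq.ne_zero)
    (hp.associated_of_dvd hq hdvd))

/-- Lemma 1: Two PR codes with distinct primitive connection polynomials of
degree `k` and length `n ≥ 2k` share no nonzero codeword. -/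
theorem stmt4 (k n : ℕ) (hn : 2 * k ≤ n)
    (p₁ p₂ : Polynomial (ZMod 2))
    (hp₁ : IsPrimitivePoly k p₁) (hp₂ : IsPrimitivePoly k p₂) (hne : p₁ ≠ p₂) :
    PRCode k n p₁ ∩ PRCode k n p₂ = {0} := by
  obtain ⟨hdeg₁, hirr₁, -⟩ := hp₁
  obtain ⟨hdeg₂, hirr₂, -⟩ := hp₂
  refine Set.eq_singleton_iff_unique_mem.2 ⟨⟨fun m _ => by simp, fun m _ => by simp⟩, ?_⟩
  rintro v ⟨hv₁, hv₂⟩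
  have hV : ofFn n v = 0 := eq_zero_of_isCoprime_of_coeff_mul_eq_zero
    (isCoprime_of_irreducible_of_ne hirr₁ hirr₂ hne) hdeg₁ hdeg₂ hn (ofFn_degree_lt v)
    ((mem_PRCode_iff hdeg₁.le).1 hv₁) ((mem_PRCode_iff hdeg₂.le).1 hv₂)
  exact injective_ofFn n (hV.trans (map_zero _).symm)
end

section
/- Let p be a primitive polynomial of degree k ≥ 1 over 𝔽₂ and n ≥ k. A vector v = (v_0, …, v_{n−1}) ∈ 𝔽₂^n satisfies Σ_{i=0}^{n−1} v_i w_i = 0 for every codeword w ∈ C(p, n) if and only if the polynomial v(x) = Σ_{i=0}^{n−1} v_i x^i is divisible in 𝔽₂[x] by the reciprocal polynomial p*(x) = x^k p(1/x). Consequently, the dual code C(p, n)^⊥ equals the polynomial code {u(x) p*(x) : u ∈ 𝔽₂[x], deg(u p*) < n} (viewed as coefficient vectors in 𝔽₂^n), and it has dimension n − k. -/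
/-- The reciprocal polynomial `p*(x) = x^k p(1/x) = ∑_{i=0}^{k} p_{k-i} x^i`. -/
noncomputable def recipPoly (k : ℕ) (p : Polynomial (ZMod 2)) : Polynomial (ZMod 2) :=
  ∑ i ∈ Finset.range (k + 1), Polynomial.C (p.coeff (k - i)) * Polynomial.X ^ i

/-- The polynomial `v(x) = ∑_{i=0}^{n-1} v_i x^i` associated to a vector `v ∈ 𝔽₂ⁿ`. -/
noncomputable def vecPoly (n : ℕ) (v : Fin n → ZMod 2) : Polynomial (ZMod 2) :=
  ∑ i : Fin n, Polynomial.C (v i) * Polynomial.X ^ (i : ℕ)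


open Polynomial

section PolyCode

variable {F : Type*} [Field F] {n : ℕ} {g : F[X]}

theorem coeff_sum_C_mul_X_pow_fin (v : Fin n → F) (m : ℕ) :
    (∑ i : Fin n, C (v i) * X ^ (i : ℕ)).coeff m = if h : m < n then v ⟨m, h⟩ else 0 := by
  simp only [finsetSum_coeff, coeff_C_mul_X_pow]
  split_ifs with h
  · rw [Finset.sum_eq_single ⟨m, h⟩ (fun i _ hi => if_neg fun him => hi (Fin.ext him.symm))
      (by simp), if_pos rfl]
  · exact Finset.sum_eq_zero fun i _ => if_neg (by omega)

noncomputable def polyCode (n : ℕ) (g : F[X]) : Submodule F (Fin n → F) :=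
  LinearMap.ker
    (modByMonicHom g ∘ₗ Fintype.linearCombination F fun i : Fin n => (X : F[X]) ^ (i : ℕ))

theorem mem_polyCode_iff (hg : g.Monic) (v : Fin n → F) :
    v ∈ polyCode n g ↔ g ∣ ∑ i, C (v i) * X ^ (i : ℕ) := by
  simp only [polyCode, LinearMap.mem_ker, LinearMap.comp_apply, modByMonicHom_apply,
    Fintype.linearCombination_apply, smul_eq_C_mul]
  exact modByMonic_eq_zero_iff_dvd hg

theorem finrank_polyCode (hg : g.Monic) (hgn : g.natDegree ≤ n) :
    Module.finrank F (polyCode n g) = n - g.natDegree := by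
  set f := modByMonicHom g ∘ₗ Fintype.linearCombination F fun i : Fin n => (X : F[X]) ^ (i : ℕ)
  have hrange : LinearMap.range f = degreeLT F g.natDegree := by
    apply le_antisymm
    · rintro _ ⟨v, rfl⟩
      rw [mem_degreeLT, ← degree_eq_natDegree hg.ne_zero]
      exact degree_modByMonic_lt _ hg
    · intro q hq
      rw [mem_degreeLT] at hq
      refine ⟨fun i => q.coeff i, ?_⟩
      have hsum : ∑ i : Fin n, C (q.coeff i) * X ^ (i : ℕ) = q := by
        ext m
        rw [coeff_sum_C_mul_X_pow_fin]
        split_ifs with hm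
        · rfl
        · have hgm : g.natDegree ≤ m := hgn.trans (not_lt.mp hm)
          exact (coeff_eq_zero_of_degree_lt (hq.trans_le (by exact_mod_cast hgm))).symm
      simp only [f, LinearMap.comp_apply, Fintype.linearCombination_apply, modByMonicHom_apply,
        smul_eq_C_mul, hsum]
      rwa [modByMonic_eq_self_iff hg, degree_eq_natDegree hg.ne_zero]
  have := LinearMap.finrank_range_add_finrank_ker f
  rw [hrange, (degreeLTEquiv F _).finrank_eq, Module.finrank_fin_fun, Module.finrank_fin_fun] at this
  change Module.finrank F (LinearMap.ker f) = _
  omega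

end PolyCode

section PRCode

variable {k n : ℕ} {p : (ZMod 2)[X]}

theorem IsPrimitivePoly.coeff_zero_eq_one (hp : IsPrimitivePoly k p) : p.coeff 0 = 1 := by
  obtain ⟨hdeg, hirr, hord⟩ := hp
  have hne : p.coeff 0 ≠ 0 := by
    intro h0
    have hXp : X ∣ p := X_dvd_iff.mpr h0
    have hpX : p ∣ X := irreducible_X.dvd_symm hirr hXp
    have hk : k = 1 := by
      rw [← hdeg, natDegree_eq_of_degree_eq
        (degree_eq_degree_of_associated (associated_of_dvd_dvd hpX hXp)), natDegree_X]
    have : Fact (Irreducible p) := ⟨hirr⟩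
    have hroot : AdjoinRoot.root p = 0 := AdjoinRoot.mk_eq_zero.mpr hpX
    rw [hroot, hk] at hord
    exact zero_ne_one (orderOf_eq_one_iff.mp hord)
  exact Fin.eq_one_of_ne_zero _ hne

theorem recipPoly_coeff (k : ℕ) (p : (ZMod 2)[X]) (j : ℕ) :
    (recipPoly k p).coeff j = if j ≤ k then p.coeff (k - j) else 0 := by
  simp only [recipPoly, finsetSum_coeff, coeff_C_mul_X_pow]
  rw [Finset.sum_ite_eq (Finset.range (k + 1)) j fun i => p.coeff (k - i)]
  simp only [Finset.mem_range, Nat.lt_succ_iff]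

theorem recipPoly_natDegree (hp0 : p.coeff 0 = 1) : (recipPoly k p).natDegree = k :=
  natDegree_eq_of_le_of_coeff_ne_zero
    (natDegree_le_iff_coeff_eq_zero.mpr fun j hj => by
      rw [recipPoly_coeff, if_neg (by exact_mod_cast not_le.mpr hj)])
    (by simp [recipPoly_coeff, hp0])

theorem recipPoly_monic (hp0 : p.coeff 0 = 1) : (recipPoly k p).Monic := by
  rw [Monic, leadingCoeff, recipPoly_natDegree hp0, recipPoly_coeff]
  simp [hp0]

theorem vecPoly_coeff (v : Fin n → ZMod 2) (m : ℕ) :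
    (vecPoly n v).coeff m = if h : m < n then v ⟨m, h⟩ else 0 :=
  coeff_sum_C_mul_X_pow_fin v m

theorem degree_vecPoly_lt (v : Fin n → ZMod 2) : (vecPoly n v).degree < n :=
  (degree_lt_iff_coeff_zero _ _).mpr fun m hm => by rw [vecPoly_coeff, dif_neg (by omega)]

noncomputable def coeffPairing (w : Fin n → ZMod 2) : (ZMod 2)[X] →ₗ[ZMod 2] ZMod 2 :=
  ∑ i : Fin n, w i • lcoeff (ZMod 2) i

theorem coeffPairing_apply (w : Fin n → ZMod 2) (q : (ZMod 2)[X]) :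
    coeffPairing w q = ∑ i : Fin n, w i * q.coeff i := by
  simp [coeffPairing]

theorem sum_mul_eq_coeffPairing_vecPoly (v w : Fin n → ZMod 2) :
    ∑ i, v i * w i = coeffPairing w (vecPoly n v) := by
  simp [coeffPairing_apply, vecPoly_coeff, mul_comm]

theorem coeffPairing_X_pow_mul_recipPoly {w : Fin n → ZMod 2} (hw : w ∈ PRCode k n p) {j : ℕ}
    (hj : j + k < n) : coeffPairing w (X ^ j * recipPoly k p) = 0 := by
  rw [coeffPairing_apply, ← hw ⟨j + k, hj⟩ (Nat.le_add_left k j)]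
  refine (Finset.sum_of_injOn (fun i => (⟨j + k - i, by omega⟩ : Fin n)) ?_ ?_ ?_ ?_).symm
  · intro a ha b hb hab
    simp only [Finset.coe_range, Set.mem_Iio, Fin.mk.injEq] at ha hb hab
    omega
  · exact fun _ _ => Finset.mem_univ _
  · intro b _ hb
    rw [coeff_X_pow_mul', recipPoly_coeff]
    split_ifs with h1 h2
    · exact absurd ⟨j + k - b, by simp; omega, by ext; simp; omega⟩ hb
    · rw [mul_zero]
    · rw [mul_zero]
  · intro i hi
    rw [Finset.mem_range] at hi
    dsimp only
    rw [coeff_X_pow_mul', if_pos (by omega), recipPoly_coeff, if_pos (by omega), mul_comm]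
    congr 2
    omega

theorem coeffPairing_mul_recipPoly (hp0 : p.coeff 0 = 1) {w : Fin n → ZMod 2}
    (hw : w ∈ PRCode k n p) {u : (ZMod 2)[X]} (hu : (u * recipPoly k p).degree < n) :
    coeffPairing w (u * recipPoly k p) = 0 := by
  rcases eq_or_ne u 0 with rfl | hu0
  · simp
  have hP := (recipPoly_monic (k := k) hp0).ne_zero
  have hun : u.natDegree < n - k := by
    have := (natDegree_lt_iff_degree_lt (mul_ne_zero hu0 hP)).mpr hu
    rw [natDegree_mul hu0 hP, recipPoly_natDegree hp0] at this
    omega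
  rw [as_sum_range_C_mul_X_pow' u hun, Finset.sum_mul, map_sum]
  refine Finset.sum_eq_zero fun j hj => ?_
  rw [Finset.mem_range] at hj
  rw [mul_assoc, ← smul_eq_C_mul, map_smul, coeffPairing_X_pow_mul_recipPoly hw (by omega),
    smul_zero]

/-- The parity check `∑ pᵢ w_{m-i} = 0` solved for `w_m` when `p₀ = 1`. -/
def prRecurrence (k : ℕ) (p : (ZMod 2)[X]) : LinearRecurrence (ZMod 2) :=
  ⟨k, fun t => -p.coeff (k - t)⟩

theorem mkSol_mem_PRCode (hp0 : p.coeff 0 = 1) (init : Fin k → ZMod 2) :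
    (fun i : Fin n => (prRecurrence k p).mkSol init i) ∈ PRCode k n p := by
  set u := (prRecurrence k p).mkSol init
  intro m hm
  obtain ⟨j, hj⟩ : ∃ j, (m : ℕ) = j + k := ⟨m - k, by omega⟩
  have hsol : u (j + k) = ∑ t : Fin k, -p.coeff (k - t) * u (j + t) :=
    (prRecurrence k p).is_sol_mkSol init j
  have hreflect : ∑ i ∈ Finset.range k, p.coeff (i + 1) * u (j + k - (i + 1)) =
      ∑ t : Fin k, p.coeff (k - t) * u (j + t) := by
    rw [Fin.sum_univ_eq_sum_range (fun t => p.coeff (k - t) * u (j + t)),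
      ← Finset.sum_range_reflect]
    refine Finset.sum_congr rfl fun i hi => ?_
    rw [Finset.mem_range] at hi
    congr 2 <;> omega
  simp only [hj, Finset.sum_range_succ', Nat.sub_zero, hp0, one_mul, hreflect, hsol, neg_mul,
    Finset.sum_neg_distrib, add_neg_cancel]

theorem eq_zero_of_forall_PRCode_coeffPairing_eq_zero (hp0 : p.coeff 0 = 1) (hkn : k ≤ n)
    {r : (ZMod 2)[X]} (hr : r.degree < k) (h : ∀ w ∈ PRCode k n p, coeffPairing w r = 0) :
    r = 0 := by
  have hinit (init : Fin k → ZMod 2) (i : ℕ) (hi : i < k) :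
      (prRecurrence k p).mkSol init i = init ⟨i, hi⟩ :=
    (prRecurrence k p).mkSol_eq_init init ⟨i, hi⟩
  ext j
  rw [coeff_zero]
  by_cases hj : j < k
  · have := h _ (mkSol_mem_PRCode (n := n) hp0 (Pi.single ⟨j, hj⟩ 1))
    rwa [coeffPairing_apply, Finset.sum_eq_single ⟨j, by omega⟩, hinit _ j hj, Pi.single_eq_same,
      one_mul] at this
    · intro i _ hij
      by_cases hi : (i : ℕ) < k
      · rw [hinit _ i hi, Pi.single_eq_of_ne (by simpa [Fin.ext_iff] using hij), zero_mul]
      · rw [coeff_eq_zero_of_degree_lt (hr.trans_le (by exact_mod_cast not_lt.mp hi)), mul_zero]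
    · simp
  · exact coeff_eq_zero_of_degree_lt (hr.trans_le (by exact_mod_cast not_lt.mp hj))

theorem forall_PRCode_sum_mul_eq_zero_iff (hp0 : p.coeff 0 = 1) (hkn : k ≤ n)
    (v : Fin n → ZMod 2) :
    (∀ w ∈ PRCode k n p, ∑ i, v i * w i = 0) ↔ recipPoly k p ∣ vecPoly n v := by
  have hP : (recipPoly k p).Monic := recipPoly_monic hp0
  simp only [sum_mul_eq_coeffPairing_vecPoly]
  constructor
  · intro h
    rw [← modByMonic_eq_zero_iff_dvd hP]
    set q := vecPoly n v /ₘ recipPoly k p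
    set r := vecPoly n v %ₘ recipPoly k p
    have hr : r.degree < k := by
      simpa only [degree_eq_natDegree hP.ne_zero, recipPoly_natDegree hp0] using
        degree_modByMonic_lt (vecPoly n v) hP
    have hqP : q * recipPoly k p = vecPoly n v - r := by
      rw [mul_comm, eq_sub_iff_add_eq', modByMonic_add_div]
    have hqP_deg : (q * recipPoly k p).degree < n := by
      rw [hqP]
      exact (degree_sub_le _ _).trans_lt
        (max_lt (degree_vecPoly_lt v) (hr.trans_le (by exact_mod_cast hkn)))
    refine eq_zero_of_forall_PRCode_coeffPairing_eq_zero hp0 hkn hr fun w hw => ?_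
    rw [show r = vecPoly n v - q * recipPoly k p by rw [hqP, sub_sub_cancel], map_sub, h w hw,
      coeffPairing_mul_recipPoly hp0 hw hqP_deg, sub_zero]
  · rintro ⟨u, hu⟩ w hw
    rw [hu, mul_comm]
    exact coeffPairing_mul_recipPoly hp0 hw (by rw [mul_comm, ← hu]; exact degree_vecPoly_lt v)

end PRCode

theorem stmt6_general (k n : ℕ) (hn : k ≤ n)
    (p : Polynomial (ZMod 2)) (hp : IsPrimitivePoly k p) :
    (∀ v : Fin n → ZMod 2,
      (∀ w ∈ PRCode k n p, ∑ i : Fin n, v i * w i = 0) ↔ recipPoly k p ∣ vecPoly n v) ∧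
    {v : Fin n → ZMod 2 | ∀ w ∈ PRCode k n p, ∑ i : Fin n, v i * w i = 0}
      = {v : Fin n → ZMod 2 | ∃ u : Polynomial (ZMod 2),
          (u * recipPoly k p).degree < (n : ℕ) ∧ vecPoly n v = u * recipPoly k p} ∧
    ∃ D : Submodule (ZMod 2) (Fin n → ZMod 2),
      (D : Set (Fin n → ZMod 2))
          = {v : Fin n → ZMod 2 | ∀ w ∈ PRCode k n p, ∑ i : Fin n, v i * w i = 0} ∧
      Module.finrank (ZMod 2) D = n - k := by
  have hp0 := hp.coeff_zero_eq_one
  have hP := recipPoly_monic (k := k) hp0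
  have horth := forall_PRCode_sum_mul_eq_zero_iff hp0 hn
  refine ⟨horth, ?_, polyCode n (recipPoly k p), ?_, ?_⟩
  · ext v
    exact (horth v).trans <| dvd_iff_exists_eq_mul_left.trans <|
      exists_congr fun u => ⟨fun hu => ⟨hu ▸ degree_vecPoly_lt v, hu⟩, And.right⟩
  · ext v
    exact (mem_polyCode_iff hP v).trans (horth v).symm
  · rw [finrank_polyCode hP (by rw [recipPoly_natDegree hp0]; exact hn), recipPoly_natDegree hp0]

/-- `v` is orthogonal to every codeword of `C(p, n)` iff `p*(x)` divides `v(x)`;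
consequently the dual code is the polynomial code generated by `p*` and has dimension `n - k`. -/
theorem stmt6 (k n : ℕ) (hk : 1 ≤ k) (hn : k ≤ n)
    (p : Polynomial (ZMod 2)) (hp : IsPrimitivePoly k p) :
    (∀ v : Fin n → ZMod 2,
      (∀ w ∈ PRCode k n p, ∑ i : Fin n, v i * w i = 0) ↔ recipPoly k p ∣ vecPoly n v) ∧
    {v : Fin n → ZMod 2 | ∀ w ∈ PRCode k n p, ∑ i : Fin n, v i * w i = 0}
      = {v : Fin n → ZMod 2 | ∃ u : Polynomial (ZMod 2),
          (u * recipPoly k p).degree < (n : ℕ) ∧ vecPoly n v = u * recipPoly k p} ∧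
    ∃ D : Submodule (ZMod 2) (Fin n → ZMod 2),
      (D : Set (Fin n → ZMod 2))
          = {v : Fin n → ZMod 2 | ∀ w ∈ PRCode k n p, ∑ i : Fin n, v i * w i = 0} ∧
      Module.finrank (ZMod 2) D = n - k :=
  stmt6_general k n hn p hp
end

section
/- Let p be a primitive polynomial of degree k ≥ 1 over 𝔽₂ and let n satisfy k ≤ n ≤ 2^k − 1. Then Σ_{v ∈ C(p,n)} wt(v)² = 2^{k−2} · n · (n + 1); equivalently, the Hamming weights of the 2^k codewords of the PR code C(p, n) have mean n/2 and variance n/4. -/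
open Finset Module Polynomial

theorem ZMod.eq_zero_or_eq_one (x : ZMod 2) : x = 0 ∨ x = 1 := by
  decide +revert

def signChar (x : ZMod 2) : ℚ := if x = 0 then 1 else -1

theorem signChar_add (x y : ZMod 2) : signChar (x + y) = signChar x * signChar y := by
  rcases x.eq_zero_or_eq_one with rfl | rfl <;> rcases y.eq_zero_or_eq_one with rfl | rfl <;>
    simp [signChar, CharTwo.add_self_eq_zero]

theorem hammingNorm_eq_sum_signChar {ι : Type*} [Fintype ι] (v : ι → ZMod 2) :
    (hammingNorm v : ℚ) = ∑ i, (1 - signChar (v i)) / 2 := by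
  rw [hammingNorm, card_filter]
  push_cast
  refine sum_congr rfl fun i _ => ?_
  rcases (v i).eq_zero_or_eq_one with h | h <;> norm_num [h, signChar]

section DualCharacterSums

variable {V : Type*} [AddCommGroup V] [Module (ZMod 2) V] [Fintype (Dual (ZMod 2) V)]

theorem sum_signChar_dual_apply [DecidableEq V] (c : V) :
    ∑ f : Dual (ZMod 2) V, signChar (f c) =
      if c = 0 then (Fintype.card (Dual (ZMod 2) V) : ℚ) else 0 := by
  split_ifs with hc
  · simp [hc, signChar]
  obtain ⟨g, hg⟩ : ∃ g : Dual (ZMod 2) V, g c ≠ 0 := by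
    by_contra! h
    exact hc ((forall_dual_apply_eq_zero_iff (ZMod 2) c).mp h)
  have hg1 : signChar (g c) = -1 := by simp [signChar, hg]
  have hflip : ∑ f : Dual (ZMod 2) V, signChar (f c) = -∑ f : Dual (ZMod 2) V, signChar (f c) :=
    calc ∑ f : Dual (ZMod 2) V, signChar (f c)
        = ∑ f : Dual (ZMod 2) V, signChar ((f + g) c) :=
          (Fintype.sum_equiv (Equiv.addRight g) _ _ fun _ => rfl).symm
      _ = -∑ f : Dual (ZMod 2) V, signChar (f c) := by
          simp only [LinearMap.add_apply, signChar_add, hg1, mul_neg_one, sum_neg_distrib]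
  linarith

theorem sum_dual_indicator_mul_indicator [DecidableEq V] {x y : V} (hx : x ≠ 0) (hy : y ≠ 0) :
    ∑ f : Dual (ZMod 2) V, (1 - signChar (f x)) / 2 * ((1 - signChar (f y)) / 2) =
      Fintype.card (Dual (ZMod 2) V) * (if x = y then 2 else 1) / 4 := by
  have hexpand : ∀ f : Dual (ZMod 2) V, (1 - signChar (f x)) / 2 * ((1 - signChar (f y)) / 2) =
      (1 - signChar (f x) - signChar (f y) + signChar (f (x + y))) / 4 := by
    intro f
    rw [map_add, signChar_add]
    ring
  have hxy : x + y = 0 ↔ x = y := by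
    rw [add_eq_zero_iff_eq_neg, ZModModule.neg_eq_self]
  simp only [hexpand, ← sum_div, sum_add_distrib, sum_sub_distrib, sum_signChar_dual_apply, hx, hy,
    hxy, if_false, sum_const, card_univ, nsmul_eq_mul, mul_one]
  split_ifs <;> ring

theorem sum_hammingNorm_dual_apply_sq {ι : Type*} [Fintype ι] {x : ι → V}
    (hx : Function.Injective x) (hx0 : ∀ i, x i ≠ 0) :
    ∑ f : Dual (ZMod 2) V, (hammingNorm (fun i => f (x i)) : ℚ) ^ 2 =
      Fintype.card (Dual (ZMod 2) V) * Fintype.card ι * (Fintype.card ι + 1) / 4 := by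
  classical
  calc ∑ f : Dual (ZMod 2) V, (hammingNorm (fun i => f (x i)) : ℚ) ^ 2
      = ∑ i, ∑ j, ∑ f : Dual (ZMod 2) V,
          (1 - signChar (f (x i))) / 2 * ((1 - signChar (f (x j))) / 2) := by
        simp only [hammingNorm_eq_sum_signChar, sq, sum_mul_sum]
        rw [sum_comm]
        exact sum_congr rfl fun i _ => sum_comm
    _ = ∑ i : ι, ∑ j : ι,
          (Fintype.card (Dual (ZMod 2) V) : ℚ) * (if i = j then 2 else 1) / 4 := by
        simp only [sum_dual_indicator_mul_indicator (hx0 _) (hx0 _), hx.eq_iff]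
    _ = ∑ i : ι, ∑ j : ι, ((Fintype.card (Dual (ZMod 2) V) : ℚ) / 4 +
          if i = j then (Fintype.card (Dual (ZMod 2) V) : ℚ) / 4 else 0) := by
        congr! 2 with i _ j _
        split_ifs <;> ring
    _ = _ := by
        simp only [sum_add_distrib, sum_ite_eq, mem_univ, if_true, sum_const, card_univ,
          nsmul_eq_mul]
        ring

end DualCharacterSums

theorem PRCode.eq_of_forall_lt_eq {k n : ℕ} {p : (ZMod 2)[X]} (hp0 : p.coeff 0 ≠ 0)
    {v w : Fin n → ZMod 2} (hv : v ∈ PRCode k n p) (hw : w ∈ PRCode k n p)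
    (h : ∀ i : Fin n, (i : ℕ) < k → v i = w i) : v = w := by
  suffices ∀ m (hm : m < n), v ⟨m, hm⟩ = w ⟨m, hm⟩ from funext fun i => this i i.2
  intro m
  induction m using Nat.strong_induction_on with
  | _ m ih =>
    intro hm
    by_cases hmk : m < k
    · exact h _ hmk
    -- the `i = 0` term of the recurrence at `m` isolates `p₀ vₘ`
    have hv' := hv ⟨m, hm⟩ (not_lt.1 hmk)
    have hw' := hw ⟨m, hm⟩ (not_lt.1 hmk)
    rw [sum_range_succ'] at hv' hw'
    have hrest : ∀ i ∈ range k, p.coeff (i + 1) * v ⟨m - (i + 1), by omega⟩ =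
        p.coeff (i + 1) * w ⟨m - (i + 1), by omega⟩ := fun i hi => by
      rw [ih (m - (i + 1)) (by have := mem_range.1 hi; omega)]
    rw [sum_congr rfl hrest, ← hw', add_right_inj] at hv'
    exact mul_left_cancel₀ hp0 hv'

theorem PRCode.card_toFinset_le {k n : ℕ} {p : (ZMod 2)[X]} (hp0 : p.coeff 0 ≠ 0) (hkn : k ≤ n) :
    (Set.toFinite (PRCode k n p)).toFinset.card ≤ 2 ^ k :=
  calc (Set.toFinite (PRCode k n p)).toFinset.card
      ≤ (univ : Finset (Fin k → ZMod 2)).card := by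
        refine card_le_card_of_injOn (fun v i => v ⟨i, by omega⟩)
          (fun _ _ => mem_coe.2 (mem_univ _)) fun v hv w hw hvw => ?_
        simp only [Set.Finite.coe_toFinset] at hv hw
        exact PRCode.eq_of_forall_lt_eq hp0 hv hw fun i hi => congrFun hvw ⟨i, hi⟩
    _ = 2 ^ k := by simp

theorem sum_coeff_smul_pow_sub_eq_zero {R A : Type*} [CommSemiring R] [CommSemiring A]
    [Algebra R A] {p : R[X]} {α β : A} (hαβ : α * β = 1) (hα : aeval α p = 0) {m : ℕ}
    (hm : p.natDegree ≤ m) :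
    ∑ i ∈ range (p.natDegree + 1), p.coeff i • β ^ (m - i) = 0 :=
  calc ∑ i ∈ range (p.natDegree + 1), p.coeff i • β ^ (m - i)
      = β ^ m * ∑ i ∈ range (p.natDegree + 1), p.coeff i • α ^ i := by
        rw [mul_sum]
        refine sum_congr rfl fun i hi => ?_
        have him : i ≤ m := by have := mem_range.1 hi; omega
        rw [mul_smul_comm, ← Nat.sub_add_cancel him, pow_add, mul_assoc, ← mul_pow, mul_comm β,
          hαβ, one_pow, mul_one, Nat.add_sub_cancel]
    _ = 0 := by rw [← aeval_eq_sum_range, hα, mul_zero]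

theorem dual_apply_pow_mem_PRCode {A : Type*} [CommRing A] [Algebra (ZMod 2) A]
    {p : (ZMod 2)[X]} {α β : A} (hαβ : α * β = 1) (hα : aeval α p = 0) (f : Dual (ZMod 2) A)
    (n : ℕ) :
    (fun i : Fin n => f (β ^ (i : ℕ))) ∈ PRCode p.natDegree n p := fun m hm =>
  calc ∑ i ∈ range (p.natDegree + 1), p.coeff i * f (β ^ ((m : ℕ) - i))
      = f (∑ i ∈ range (p.natDegree + 1), p.coeff i • β ^ ((m : ℕ) - i)) := by
        simp only [map_sum, map_smul, smul_eq_mul]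
    _ = 0 := by rw [sum_coeff_smul_pow_sub_eq_zero hαβ hα hm, map_zero]

theorem injective_inv_pow_of_le_orderOf {G₀ : Type*} [GroupWithZero G₀] {a : G₀} {n : ℕ}
    (hn : n ≤ orderOf a) : Function.Injective fun i : Fin n => a⁻¹ ^ (i : ℕ) := fun i j hij =>
  Fin.ext <| pow_injOn_Iio_orderOf (x := a) (Set.mem_Iio.2 (by omega)) (Set.mem_Iio.2 (by omega))
    (inv_injective (by simpa only [inv_pow] using hij))

namespace AdjoinRoot

theorem coeff_zero_ne_zero_of_root_ne_zero {K : Type*} [Field K] {p : K[X]} (hp : Irreducible p)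
    (h : root p ≠ 0) : p.coeff 0 ≠ 0 := fun h0 => h <| by
  rw [← mk_X, mk_eq_zero]
  exact irreducible_X.dvd_symm hp (X_dvd_iff.2 h0)

theorem card_dual {K : Type*} [Field K] [Fintype K] {p : K[X]} (hp : p ≠ 0)
    [Fintype (Dual K (AdjoinRoot p))] :
    Fintype.card (Dual K (AdjoinRoot p)) = Fintype.card K ^ p.natDegree := by
  rw [card_eq_pow_finrank (K := K), Subspace.dual_finrank_eq, (powerBasis hp).finrank,
    powerBasis_dim]

section Field

variable {p : (ZMod 2)[X]} [Fact (Irreducible p)]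

theorem dual_apply_inv_root_pow_mem_PRCode (h : root p ≠ 0) (f : Dual (ZMod 2) (AdjoinRoot p))
    (n : ℕ) : (fun i : Fin n => f ((root p)⁻¹ ^ (i : ℕ))) ∈ PRCode p.natDegree n p :=
  dual_apply_pow_mem_PRCode (mul_inv_cancel₀ h) (by rw [aeval_eq, mk_self]) f n

theorem injective_dual_apply_inv_root_pow (hfin : IsOfFinOrder (root p)) (hp0 : p.coeff 0 ≠ 0)
    {n : ℕ} (hn : p.natDegree ≤ n) :
    Function.Injective fun (f : Dual (ZMod 2) (AdjoinRoot p)) (i : Fin n) =>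
      f ((root p)⁻¹ ^ (i : ℕ)) := by
  intro f g hfg
  have hmem := dual_apply_inv_root_pow_mem_PRCode hfin.isUnit.ne_zero
  -- the codewords of length `m + 1` given by `f` and `g` share their first `deg p ≤ n` coordinates
  have hpow (m : ℕ) : f ((root p)⁻¹ ^ m) = g ((root p)⁻¹ ^ m) :=
    congrFun (PRCode.eq_of_forall_lt_eq hp0 (hmem f (m + 1)) (hmem g (m + 1))
      fun i hi => congrFun hfg ⟨i, by omega⟩) ⟨m, by omega⟩
  have hroot_eq : root p = (root p)⁻¹ ^ (orderOf (root p) - 1) := by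
    rw [inv_pow, inv_eq_of_mul_eq_one_right]
    rw [← pow_succ, Nat.sub_add_cancel hfin.orderOf_pos, pow_orderOf_eq_one]
  refine (powerBasis (Fact.out : Irreducible p).ne_zero).basis.ext fun i => ?_
  rw [PowerBasis.basis_eq_pow, powerBasis_gen, hroot_eq, ← pow_mul]
  exact hpow _

end Field

end AdjoinRoot

/-- For `k ≤ n ≤ 2^k - 1`, the sum of the squared Hamming weights of the
codewords of `C(p, n)` equals `2^(k-2) · n · (n+1)`; equivalently the weights have mean `n/2`
and variance `n/4`. -/
theorem stmt9 (k n : ℕ) (hk : 1 ≤ k) (hn : k ≤ n) (hn' : n ≤ 2 ^ k - 1)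
    (p : Polynomial (ZMod 2)) (hp : IsPrimitivePoly k p) :
    ∑ v ∈ (Set.toFinite (PRCode k n p)).toFinset, ((hammingNorm v : ℚ)) ^ 2
      = (2 : ℚ) ^ ((k : ℤ) - 2) * n * (n + 1) := by
  obtain ⟨hdeg, hirr, hord⟩ := hp
  subst hdeg
  have : Fact (Irreducible p) := ⟨hirr⟩
  have hfin : IsOfFinOrder (AdjoinRoot.root p) := orderOf_pos_iff.1 <| by
    rw [hord]
    have := Nat.one_lt_two_pow_iff.2 (by omega : p.natDegree ≠ 0)
    omega
  have hroot : AdjoinRoot.root p ≠ 0 := hfin.isUnit.ne_zero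
  have hp0 := AdjoinRoot.coeff_zero_ne_zero_of_root_ne_zero hirr hroot
  have : Module.Finite (ZMod 2) (AdjoinRoot p) := (AdjoinRoot.powerBasis hirr.ne_zero).finite
  have : Fintype (Dual (ZMod 2) (AdjoinRoot p)) :=
    @Fintype.ofFinite _ (Module.finite_of_finite (ZMod 2))
  have hcard : Fintype.card (Dual (ZMod 2) (AdjoinRoot p)) = 2 ^ p.natDegree := by
    rw [AdjoinRoot.card_dual hirr.ne_zero, ZMod.card]
  set L : Dual (ZMod 2) (AdjoinRoot p) → Fin n → ZMod 2 :=
    fun f i => f ((AdjoinRoot.root p)⁻¹ ^ (i : ℕ))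
  have hL : Function.Injective L := AdjoinRoot.injective_dual_apply_inv_root_pow hfin hp0 hn
  have hcode : univ.image L = (Set.toFinite (PRCode p.natDegree n p)).toFinset := by
    refine eq_of_subset_of_card_le (fun v hv => ?_) ?_
    · obtain ⟨f, -, rfl⟩ := mem_image.1 hv
      exact (Set.toFinite _).mem_toFinset.2 <|
        AdjoinRoot.dual_apply_inv_root_pow_mem_PRCode hroot f n
    · rw [card_image_of_injective _ hL, card_univ, hcard]
      exact PRCode.card_toFinset_le hp0 hn
  rw [← hcode, sum_image hL.injOn,
    sum_hammingNorm_dual_apply_sq (injective_inv_pow_of_le_orderOf (hord ▸ hn'))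
      fun i => pow_ne_zero _ (inv_ne_zero hroot),
    hcard, Fintype.card_fin, zpow_sub₀ two_ne_zero, zpow_natCast]
  push_cast
  ring
end

section
/- Let p be a primitive polynomial of degree k ≥ 1 over 𝔽₂. If n ≥ 2k, then the PR code C(p, n) contains no codeword of Hamming weight 1; if moreover n ≥ 3k, then C(p, n) also contains no codeword of Hamming weight 2, so every nonzero codeword of C(p, n) has Hamming weight at least 3. -/
/-!
A primitive `p` has `p_k ≠ 0` and `p_0 ≠ 0` (the latter because the root of `p` has positive
order, so it is not `0`). The check at position `m` sees exactly the window `v_{m-k}, …, v_m`,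
with weight `p_k` on its left end and `p_0` on its right end. Hence in a codeword every nonzero
entry `v_j` with `j + k < n` has another nonzero entry at most `k` places to its right, and every
nonzero entry with `j ≥ k` has one at most `k` places to its left. A single nonzero entry violates
one of these once `n ≥ 2k`. For two nonzero entries `j < l`, the second condition forces `j < k`,
the first forces `l ≥ n - k ≥ 2k`, and then `v_j` has no partner within `k` places to its right.
-/

open Polynomial

theorem IsPrimitivePoly.coeff_natDegree_ne_zero {k : ℕ} {p : (ZMod 2)[X]}
    (hp : IsPrimitivePoly k p) : p.coeff k ≠ 0 := by
  obtain ⟨hdeg, hirr, -⟩ := hp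
  rw [← hdeg, coeff_natDegree]
  exact leadingCoeff_ne_zero.2 hirr.ne_zero

theorem IsPrimitivePoly.coeff_zero_ne_zero_s15 {k : ℕ} {p : (ZMod 2)[X]} (hk : 1 ≤ k)
    (hp : IsPrimitivePoly k p) : p.coeff 0 ≠ 0 := by
  obtain ⟨-, hirr, hord⟩ := hp
  have : Fact (Irreducible p) := ⟨hirr⟩
  have hroot : AdjoinRoot.root p ≠ 0 := by
    intro h
    rw [h, orderOf_zero] at hord
    have : 2 ≤ 2 ^ k := Nat.le_self_pow (by omega) 2
    omega
  intro h0
  have hpX : p ∣ X := irreducible_X.dvd_symm hirr (X_dvd_iff.2 h0)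
  exact hroot (by rw [← AdjoinRoot.mk_X, AdjoinRoot.mk_eq_zero]; exact hpX)

namespace PRCode

variable {k n : ℕ} {p : (ZMod 2)[X]} {v : Fin n → ZMod 2}

theorem eq_zero_of_window_eq_zero (hv : v ∈ PRCode k n p) {i₀ : ℕ} (hi₀ : i₀ ≤ k)
    (hc : p.coeff i₀ ≠ 0) (j : Fin n) (hkj : k ≤ j + i₀) (hjn : j + i₀ < n)
    (hwin : ∀ i : Fin n, i ≠ j → (j : ℕ) + i₀ ≤ i + k → (i : ℕ) ≤ j + i₀ → v i = 0) :
    v j = 0 := by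
  have hcheck := hv ⟨j + i₀, hjn⟩ hkj
  rw [Finset.sum_eq_single_of_mem i₀ (Finset.mem_range.2 (Nat.lt_succ_of_le hi₀))
    fun i hi hne => ?_] at hcheck
  · have hidx : (⟨j + i₀ - i₀, by omega⟩ : Fin n) = j := Fin.ext (Nat.add_sub_cancel _ _)
    rw [hidx] at hcheck
    exact (mul_eq_zero.1 hcheck).resolve_left hc
  · have := Finset.mem_range.1 hi
    rw [hwin _ (fun h => hne (by simp [Fin.ext_iff] at h; omega)) (by simp; omega) (by simp),
      mul_zero]

theorem exists_ne_zero_left (hv : v ∈ PRCode k n p) (hp0 : p.coeff 0 ≠ 0) {j : Fin n}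
    (hj : v j ≠ 0) (hkj : k ≤ j) : ∃ i : Fin n, i < j ∧ (j : ℕ) ≤ i + k ∧ v i ≠ 0 := by
  by_contra! h
  refine hj (eq_zero_of_window_eq_zero hv (Nat.zero_le k) hp0 j hkj j.isLt fun i hij hl hr => ?_)
  exact h i (lt_of_le_of_ne (by simpa using hr) hij) (by simpa using hl)

theorem exists_ne_zero_right (hv : v ∈ PRCode k n p) (hpk : p.coeff k ≠ 0) {j : Fin n}
    (hj : v j ≠ 0) (hjn : j + k < n) : ∃ i : Fin n, j < i ∧ (i : ℕ) ≤ j + k ∧ v i ≠ 0 := by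
  by_contra! h
  refine hj (eq_zero_of_window_eq_zero hv le_rfl hpk j (Nat.le_add_left k j) hjn
    fun i hij hl hr => ?_)
  exact h i (lt_of_le_of_ne (by simpa using hl) hij.symm) hr

theorem hammingNorm_ne_one (hv : v ∈ PRCode k n p) (hp0 : p.coeff 0 ≠ 0)
    (hpk : p.coeff k ≠ 0) (hn : 2 * k ≤ n) : hammingNorm v ≠ 1 := by
  intro h
  obtain ⟨j, hj⟩ := Finset.card_eq_one.1 h
  have hsupp : ∀ i, v i ≠ 0 ↔ i = j := by simpa using Finset.ext_iff.1 hj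
  have hvj : v j ≠ 0 := (hsupp j).2 rfl
  by_cases hjn : j + k < n
  · obtain ⟨i, hji, -, hi⟩ := exists_ne_zero_right hv hpk hvj hjn
    exact hji.ne' ((hsupp i).1 hi)
  · obtain ⟨i, hij, -, hi⟩ := exists_ne_zero_left hv hp0 hvj (by omega)
    exact hij.ne ((hsupp i).1 hi)

theorem hammingNorm_ne_two (hv : v ∈ PRCode k n p) (hp0 : p.coeff 0 ≠ 0)
    (hpk : p.coeff k ≠ 0) (hn : 3 * k ≤ n) : hammingNorm v ≠ 2 := by
  intro h
  obtain ⟨a, b, hab, hS⟩ := Finset.card_eq_two.1 h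
  wlog hlt : a < b generalizing a b
  · exact this b a hab.symm (by rw [hS, Finset.pair_comm]) (lt_of_le_of_ne (not_lt.1 hlt) hab.symm)
  have hsupp : ∀ i, v i ≠ 0 ↔ i = a ∨ i = b := by simpa using Finset.ext_iff.1 hS
  have hva : v a ≠ 0 := (hsupp a).2 (.inl rfl)
  have hvb : v b ≠ 0 := (hsupp b).2 (.inr rfl)
  have ha : (a : ℕ) < k := by
    by_contra! hka
    obtain ⟨i, hia, -, hi⟩ := exists_ne_zero_left hv hp0 hva hka
    rcases (hsupp i).1 hi with rfl | rfl <;> omega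
  have hb : n ≤ b + k := by
    by_contra! hbn
    obtain ⟨i, hbi, -, hi⟩ := exists_ne_zero_right hv hpk hvb hbn
    rcases (hsupp i).1 hi with rfl | rfl <;> omega
  obtain ⟨i, hai, hik, hi⟩ := exists_ne_zero_right hv hpk hva (by omega)
  rcases (hsupp i).1 hi with rfl | rfl <;> omega

end PRCode

/-- If `n ≥ 2k` then `C(p, n)` has no codeword of weight 1; if moreover
`n ≥ 3k` then it also has no codeword of weight 2, so every nonzero codeword has weight
at least 3. -/
theorem stmt15 (k n : ℕ) (hk : 1 ≤ k)
    (p : Polynomial (ZMod 2)) (hp : IsPrimitivePoly k p) :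
    (2 * k ≤ n → ∀ v ∈ PRCode k n p, hammingNorm v ≠ 1) ∧
    (3 * k ≤ n →
      (∀ v ∈ PRCode k n p, hammingNorm v ≠ 2) ∧
      (∀ v ∈ PRCode k n p, v ≠ 0 → 3 ≤ hammingNorm v)) := by
  have hp0 := hp.coeff_zero_ne_zero_s15 hk
  have hpk := hp.coeff_natDegree_ne_zero
  refine ⟨fun hn v hv => PRCode.hammingNorm_ne_one hv hp0 hpk hn, fun hn => ⟨fun v hv =>
    PRCode.hammingNorm_ne_two hv hp0 hpk hn, fun v hv hv0 => ?_⟩⟩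
  have h0 : hammingNorm v ≠ 0 := hammingNorm_eq_zero.not.2 hv0
  have h1 := PRCode.hammingNorm_ne_one hv hp0 hpk (by omega)
  have h2 := PRCode.hammingNorm_ne_two hv hp0 hpk hn
  omega
end

section
/- Let p be a primitive polynomial of degree k ≥ 2 over 𝔽₂ and for each integer t ≥ 1 let N_t denote the number of polynomials q ∈ 𝔽₂[x] with constant term q(0) = 1, degree at most 2^k − 2, exactly t nonzero coefficients, and divisible by p. Then N_1 = N_2 = 0 and, for every t ≥ 3, (t − 1)(t − 2) · N_t = (t − 2) · C(2^k − 2, t − 2) − (t − 2) · N_{t−1} − (t − 1) · (2^k − t + 1) · N_{t−2}, where C(a, b) denotes the binomial coefficient. -/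
open Finset Polynomial

lemma sum_erase_eq_of_sum_eq_zero {G : Type*} [AddCommGroup G] [Module (ZMod 2) G]
    [DecidableEq G] {S : Finset G} {x : G} (hx : x ∈ S) (hS : ∑ y ∈ S, y = 0) :
    ∑ y ∈ S.erase x, y = x := by
  rw [sum_erase_eq_sub hx, hS, zero_sub, ZModModule.neg_eq_self]

section ZeroSumSets

variable (V : Type*) [AddCommGroup V] [Fintype V] [DecidableEq V]

def zeroSumSets (r : ℕ) : Finset (Finset V) :=
  {S ∈ (univ.erase 0).powersetCard r | ∑ x ∈ S, x = 0}

variable {V}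

lemma mem_zeroSumSets {r : ℕ} {S : Finset V} :
    S ∈ zeroSumSets V r ↔ (0 : V) ∉ S ∧ #S = r ∧ ∑ x ∈ S, x = 0 := by
  simp [zeroSumSets, mem_powersetCard, subset_erase, and_assoc]

lemma zeroSumSets_one : zeroSumSets V 1 = ∅ := by
  refine eq_empty_of_forall_notMem fun S hS => ?_
  obtain ⟨h0, hcard, hsum⟩ := mem_zeroSumSets.1 hS
  obtain ⟨x, rfl⟩ := card_eq_one.1 hcard
  rw [sum_singleton] at hsum
  exact h0 (hsum ▸ mem_singleton_self x)

lemma card_filter_sum_mem_powersetCard (r : ℕ) :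
    #{B ∈ (univ.erase (0 : V)).powersetCard (r + 1) | ∑ x ∈ B, x ∈ B}
      = (Fintype.card V - 1 - r) * #(zeroSumSets V r) := by
  calc _ = #((zeroSumSets V r).sigma fun C => univ.erase 0 \ C) := by
        refine card_nbij' (fun B => ⟨B.erase (∑ x ∈ B, x), ∑ x ∈ B, x⟩)
          (fun P => insert P.2 P.1) ?_ ?_ ?_ ?_
        · intro B hB
          simp only [coe_filter, mem_powersetCard, subset_erase, Set.mem_ofPred_eq] at hB
          obtain ⟨⟨⟨-, h0⟩, hcard⟩, hmem⟩ := hB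
          simp only [coe_sigma, Set.mem_sigma_iff, mem_coe, mem_zeroSumSets, mem_sdiff]
          refine ⟨⟨fun h => h0 (mem_of_mem_erase h), ?_, ?_⟩, mem_erase.2 ⟨?_, mem_univ _⟩,
            notMem_erase _ _⟩
          · rw [card_erase_of_mem hmem, hcard, Nat.add_sub_cancel]
          · rw [sum_erase_eq_sub hmem, sub_self]
          · intro h
            exact h0 (h ▸ hmem)
        · rintro ⟨C, x⟩ hP
          simp only [coe_sigma, Set.mem_sigma_iff, mem_coe, mem_zeroSumSets, mem_sdiff,
            mem_erase] at hP
          obtain ⟨⟨h0, hcard, hsum⟩, ⟨hx0, -⟩, hxC⟩ := hP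
          have hsum' : ∑ y ∈ insert x C, y = x := by rw [sum_insert hxC, hsum, add_zero]
          simp only [coe_filter, mem_powersetCard, subset_erase, Set.mem_ofPred_eq, hsum']
          refine ⟨⟨⟨subset_univ _, ?_⟩, ?_⟩, mem_insert_self _ _⟩
          · rw [mem_insert, not_or]
            exact ⟨Ne.symm hx0, h0⟩
          · rw [card_insert_of_notMem hxC, hcard]
        · intro B hB
          exact insert_erase (mem_filter.1 hB).2
        · rintro ⟨C, x⟩ hP
          simp only [coe_sigma, Set.mem_sigma_iff, mem_coe, mem_zeroSumSets, mem_sdiff] at hP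
          obtain ⟨⟨-, -, hsum⟩, -, hxC⟩ := hP
          have hsum' : ∑ y ∈ insert x C, y = x := by rw [sum_insert hxC, hsum, add_zero]
          simp only [hsum', erase_insert hxC]
    _ = ∑ C ∈ zeroSumSets V r, (Fintype.card V - 1 - r) := by
        rw [card_sigma]
        refine sum_congr rfl fun C hC => ?_
        obtain ⟨h0, hcard, -⟩ := mem_zeroSumSets.1 hC
        rw [card_sdiff_of_subset (subset_erase.2 ⟨subset_univ _, h0⟩),
          card_erase_of_mem (mem_univ _), card_univ, hcard]
    _ = _ := by rw [sum_const, smul_eq_mul, mul_comm]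

lemma card_zeroSumSets_eq_zero_of_lt {r : ℕ} (hr : Fintype.card V - 1 < r) :
    #(zeroSumSets V r) = 0 := by
  refine card_eq_zero.2 (eq_empty_of_forall_notMem fun S hS => ?_)
  obtain ⟨h0, hcard, -⟩ := mem_zeroSumSets.1 hS
  have := card_le_card (subset_erase.2 ⟨subset_univ S, h0⟩)
  rw [card_erase_of_mem (mem_univ _), card_univ] at this
  omega

section Elementary

variable [Module (ZMod 2) V]

lemma zeroSumSets_two : zeroSumSets V 2 = ∅ := by
  refine eq_empty_of_forall_notMem fun S hS => ?_
  obtain ⟨-, hcard, hsum⟩ := mem_zeroSumSets.1 hS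
  obtain ⟨x, y, hxy, rfl⟩ := card_eq_two.1 hcard
  rw [sum_pair hxy] at hsum
  exact hxy (by rw [← sub_eq_zero, sub_eq_add_neg, ZModModule.neg_eq_self, hsum])

lemma card_filter_sum_notMem_powersetCard (r : ℕ) :
    #{B ∈ (univ.erase (0 : V)).powersetCard (r + 1) | ∑ x ∈ B, x ∉ B ∧ ∑ x ∈ B, x ≠ 0}
      = (r + 2) * #(zeroSumSets V (r + 2)) := by
  calc _ = #((zeroSumSets V (r + 2)).sigma fun S => S) := by
        refine card_nbij' (fun B => ⟨insert (∑ x ∈ B, x) B, ∑ x ∈ B, x⟩)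
          (fun P => P.1.erase P.2) ?_ ?_ ?_ ?_
        · intro B hB
          simp only [coe_filter, mem_powersetCard, subset_erase, Set.mem_ofPred_eq] at hB
          obtain ⟨⟨⟨-, h0⟩, hcard⟩, hnotMem, hne⟩ := hB
          simp only [coe_sigma, Set.mem_sigma_iff, mem_coe, mem_zeroSumSets]
          refine ⟨⟨?_, ?_, ?_⟩, mem_insert_self _ _⟩
          · rw [mem_insert, not_or]
            exact ⟨Ne.symm hne, h0⟩
          · rw [card_insert_of_notMem hnotMem, hcard]
          · rw [sum_insert hnotMem, ZModModule.add_self]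
        · rintro ⟨S, x⟩ hP
          simp only [coe_sigma, Set.mem_sigma_iff, mem_coe, mem_zeroSumSets] at hP
          obtain ⟨⟨h0, hcard, hsum⟩, hxS⟩ := hP
          simp only [coe_filter, mem_powersetCard, subset_erase, Set.mem_ofPred_eq,
            sum_erase_eq_of_sum_eq_zero hxS hsum]
          refine ⟨⟨⟨subset_univ _, fun h => h0 (mem_of_mem_erase h)⟩, ?_⟩, notMem_erase _ _,
            fun h => h0 (h ▸ hxS)⟩
          rw [card_erase_of_mem hxS, hcard]
          rfl
        · intro B hB
          exact erase_insert (mem_filter.1 hB).2.1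
        · rintro ⟨S, x⟩ hP
          simp only [coe_sigma, Set.mem_sigma_iff, mem_coe, mem_zeroSumSets] at hP
          obtain ⟨⟨-, -, hsum⟩, hxS⟩ := hP
          simp only [sum_erase_eq_of_sum_eq_zero hxS hsum, insert_erase hxS]
    _ = _ := by
        rw [card_sigma, sum_const_nat fun S hS => (mem_zeroSumSets.1 hS).2.1, mul_comm]

theorem choose_card_sub_one_eq_card_zeroSumSets (r : ℕ) :
    (Fintype.card V - 1).choose (r + 1) = #(zeroSumSets V (r + 1))
      + (Fintype.card V - 1 - r) * #(zeroSumSets V r)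
      + (r + 2) * #(zeroSumSets V (r + 2)) := by
  set P := (univ.erase (0 : V)).powersetCard (r + 1)
  have hP : #P = (Fintype.card V - 1).choose (r + 1) := by
    rw [card_powersetCard, card_erase_of_mem (mem_univ _), card_univ]
  have hzero : {B ∈ P | ∑ x ∈ B, x ∉ B ∧ ∑ x ∈ B, x = 0} = zeroSumSets V (r + 1) := by
    refine filter_congr fun B hB => and_iff_right_of_imp fun hsum hmem => ?_
    exact (subset_erase.1 (mem_powersetCard.1 hB).1).2 (hsum ▸ hmem)
  rw [← hP, ← card_filter_add_card_filter_not (fun B => ∑ x ∈ B, x ∈ B),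
    ← card_filter_add_card_filter_not (s := {B ∈ P | ∑ x ∈ B, x ∉ B}) (fun B => ∑ x ∈ B, x = 0),
    filter_filter, filter_filter, hzero, card_filter_sum_mem_powersetCard,
    card_filter_sum_notMem_powersetCard]
  ring

end Elementary

end ZeroSumSets

lemma injOn_pow_range_orderOf {M : Type*} [Monoid M] (x : M) :
    Set.InjOn (x ^ ·) (range (orderOf x) : Set ℕ) := by
  rw [coe_range]
  exact pow_injOn_Iio_orderOf

section Field

variable {F : Type*} [Field F] [Fintype F] [DecidableEq F]

lemma image_mul_left_mem_zeroSumSets {a : F} (ha : a ≠ 0) {r : ℕ} {S : Finset F}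
    (hS : S ∈ zeroSumSets F r) : S.image (a * ·) ∈ zeroSumSets F r := by
  obtain ⟨h0, hcard, hsum⟩ := mem_zeroSumSets.1 hS
  refine mem_zeroSumSets.2 ⟨?_, ?_, ?_⟩
  · simpa [ha] using h0
  · rw [card_image_of_injective _ (mul_right_injective₀ ha), hcard]
  · rw [sum_image fun x _ y _ h => mul_left_cancel₀ ha h, ← mul_sum, hsum, mul_zero]

lemma card_filter_mem_zeroSumSets_eq {a : F} (ha : a ≠ 0) (r : ℕ) :
    #{S ∈ zeroSumSets F r | a ∈ S} = #{S ∈ zeroSumSets F r | 1 ∈ S} := by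
  refine card_nbij' (image (a⁻¹ * ·)) (image (a * ·)) ?_ ?_ ?_ ?_
  · intro S hS
    obtain ⟨hS, haS⟩ := mem_filter.1 hS
    exact mem_filter.2 ⟨image_mul_left_mem_zeroSumSets (inv_ne_zero ha) hS,
      mem_image.2 ⟨a, haS, inv_mul_cancel₀ ha⟩⟩
  · intro S hS
    obtain ⟨hS, h1S⟩ := mem_filter.1 hS
    exact mem_filter.2 ⟨image_mul_left_mem_zeroSumSets ha hS, mem_image.2 ⟨1, h1S, mul_one a⟩⟩
  · intro S _
    simp [image_image, Function.comp_def, ha]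
  · intro S _
    simp [image_image, Function.comp_def, ha]

theorem mul_card_zeroSumSets (r : ℕ) :
    r * #(zeroSumSets F r) = (Fintype.card F - 1) * #{S ∈ zeroSumSets F r | 1 ∈ S} := by
  have h := sum_card_inter (s := univ.erase (0 : F)) (B := zeroSumSets F r)
    fun a ha => card_filter_mem_zeroSumSets_eq (ne_of_mem_erase ha) r
  rw [card_erase_of_mem (mem_univ _), card_univ] at h
  rw [← h, sum_const_nat fun S hS => ?_, mul_comm]
  obtain ⟨h0, hcard, -⟩ := mem_zeroSumSets.1 hS
  rw [inter_eq_right.2 (subset_erase.2 ⟨subset_univ _, h0⟩), hcard]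

lemma image_pow_range_eq_univ_erase_zero {α : F} (hα : orderOf α = Fintype.card F - 1) :
    (range (Fintype.card F - 1)).image (α ^ ·) = univ.erase 0 := by
  have hα0 : α ≠ 0 :=
    (orderOf_pos_iff.1 (hα ▸ Nat.sub_pos_of_lt Fintype.one_lt_card)).isUnit.ne_zero
  refine eq_of_subset_of_card_le (fun x hx => ?_) ?_
  · obtain ⟨i, -, rfl⟩ := mem_image.1 hx
    exact mem_erase.2 ⟨pow_ne_zero i hα0, mem_univ _⟩
  · rw [card_image_of_injOn (hα ▸ injOn_pow_range_orderOf α),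
      card_range, card_erase_of_mem (mem_univ _), card_univ]

theorem card_filter_powerset_range_eq {α : F} (hα : orderOf α = Fintype.card F - 1) (t : ℕ) :
    #{T ∈ (range (Fintype.card F - 1)).powerset | 0 ∈ T ∧ #T = t ∧ ∑ i ∈ T, α ^ i = 0}
      = #{S ∈ zeroSumSets F t | 1 ∈ S} := by
  have hinj : Set.InjOn (α ^ ·) (range (Fintype.card F - 1) : Set ℕ) :=
    hα ▸ injOn_pow_range_orderOf α
  have himage := image_pow_range_eq_univ_erase_zero hα
  refine card_nbij (image (α ^ ·)) (fun T hT => ?_)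
    ((image_injOn_powerset_of_injOn hinj).mono (coe_subset.2 (filter_subset _ _))) ?_
  · simp only [coe_filter, mem_powerset, Set.mem_ofPred_eq] at hT
    obtain ⟨hTr, h0T, hcard, hsum⟩ := hT
    have hinjT := hinj.mono (coe_subset.2 hTr)
    refine mem_filter.2 ⟨mem_zeroSumSets.2 ⟨fun h => ?_, ?_, ?_⟩, mem_image.2 ⟨0, h0T, pow_zero α⟩⟩
    · exact (mem_erase.1 (himage ▸ image_subset_image hTr h)).1 rfl
    · rw [card_image_of_injOn hinjT, hcard]
    · rwa [sum_image hinjT]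
  · intro S hS
    obtain ⟨hS, h1S⟩ := mem_filter.1 hS
    obtain ⟨h0, hcard, hsum⟩ := mem_zeroSumSets.1 hS
    obtain ⟨T, hTr, rfl⟩ := subset_image_iff.1 (himage ▸ subset_erase.2 ⟨subset_univ S, h0⟩)
    have hinjT := hinj.mono (coe_subset.2 hTr)
    refine ⟨T, ?_, rfl⟩
    simp only [coe_filter, mem_powerset, Set.mem_ofPred_eq]
    refine ⟨hTr, ?_, by rw [← hcard, card_image_of_injOn hinjT], by rwa [sum_image hinjT] at hsum⟩
    obtain ⟨i, hi, hαi⟩ := mem_image.1 h1S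
    have hrange : 0 ∈ range (Fintype.card F - 1) :=
      mem_range.2 (Nat.sub_pos_of_lt Fintype.one_lt_card)
    exact hinj (hTr hi) hrange (hαi.trans (pow_zero α).symm) ▸ hi

variable [Module (ZMod 2) F]

theorem card_filter_one_mem_zeroSumSets_recurrence (r : ℕ) :
    ((r : ℤ) + 1) * r * #{S ∈ zeroSumSets F (r + 2) | 1 ∈ S}
      = r * (Fintype.card F - 2).choose r - r * #{S ∈ zeroSumSets F (r + 1) | 1 ∈ S}
        - (r + 1) * ((Fintype.card F : ℤ) - r - 1) * #{S ∈ zeroSumSets F r | 1 ∈ S} := by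
  have hrec := choose_card_sub_one_eq_card_zeroSumSets (V := F) r
  have hz₀ := mul_card_zeroSumSets (F := F) r
  have hz₁ := mul_card_zeroSumSets (F := F) (r + 1)
  have hz₂ := mul_card_zeroSumSets (F := F) (r + 2)
  set n := Fintype.card F
  have hn : 2 ≤ n := Fintype.one_lt_card
  have hchoose : (n - 1) * (n - 2).choose r = (n - 1).choose (r + 1) * (r + 1) := by
    rw [show n - 1 = n - 2 + 1 by omega, Nat.add_one_mul_choose_eq]
  have htrunc : ((n - 1 - r : ℕ) : ℤ) * #(zeroSumSets F r)
      = ((n : ℤ) - 1 - r) * #(zeroSumSets F r) := by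
    rcases le_or_gt r (n - 1) with h | h
    · rw [Nat.cast_sub h, Nat.cast_sub (by omega : 1 ≤ n), Nat.cast_one]
    · rw [card_zeroSumSets_eq_zero_of_lt h, Nat.cast_zero, mul_zero, mul_zero]
  have hn1 : ((n : ℤ) - 1) ≠ 0 := by omega
  -- `hz₀`, `hz₁`, `hz₂` only pin down `n - 1` times the counts of sets containing `1`
  refine mul_left_cancel₀ hn1 ?_
  zify [show 1 ≤ n by omega, show 2 ≤ n by omega] at hrec hz₀ hz₁ hz₂ hchoose
  linear_combination (-(r : ℤ) * (r + 1)) * (hrec + htrunc + hz₂) - (r : ℤ) * (hz₁ + hchoose)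
    - ((r : ℤ) + 1) * ((n : ℤ) - r - 1) * hz₀

namespace Polynomial

lemma coeff_eq_one_of_mem_support_zmod_two {q : (ZMod 2)[X]} {i : ℕ} (hi : i ∈ q.support) :
    q.coeff i = 1 := by
  have h := mem_support_iff.1 hi
  generalize q.coeff i = a at h ⊢
  revert a
  decide

lemma coeff_zero_eq_one_iff_zmod_two {q : (ZMod 2)[X]} : q.coeff 0 = 1 ↔ 0 ∈ q.support :=
  ⟨fun h => mem_support_iff.2 (h ▸ one_ne_zero), coeff_eq_one_of_mem_support_zmod_two⟩

lemma sum_X_pow_support_zmod_two (q : (ZMod 2)[X]) : ∑ i ∈ q.support, X ^ i = q := by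
  conv_rhs => rw [as_sum_support q]
  exact sum_congr rfl fun i hi => by
    rw [coeff_eq_one_of_mem_support_zmod_two hi, monomial_one_right_eq_X_pow]

lemma support_sum_X_pow {R : Type*} [Semiring R] [Nontrivial R] (T : Finset ℕ) :
    (∑ i ∈ T, (X : R[X]) ^ i).support = T := by
  ext j
  simp [mem_support_iff, coeff_X_pow]

lemma aeval_eq_sum_support_zmod_two {A : Type*} [CommRing A] [Algebra (ZMod 2) A]
    (q : (ZMod 2)[X]) (x : A) : aeval x q = ∑ i ∈ q.support, x ^ i := by
  conv_lhs => rw [← sum_X_pow_support_zmod_two q]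
  simp only [map_sum, map_pow, aeval_X]

lemma natDegree_le_iff_support_subset_range {R : Type*} [Semiring R] {p : R[X]} {m : ℕ} :
    p.natDegree ≤ m ↔ p.support ⊆ range (m + 1) := by
  refine ⟨fun h => supp_subset_range (Nat.lt_succ_of_le h), fun h => ?_⟩
  refine natDegree_le_iff_coeff_eq_zero.2 fun i hi => notMem_support_iff.1 fun hmem => ?_
  have := mem_range.1 (h hmem)
  omega

theorem ncard_setOf_support_zmod_two (m : ℕ) (Q : Finset ℕ → Prop) [DecidablePred Q] :
    {q : (ZMod 2)[X] | q.support ⊆ range m ∧ Q q.support}.ncard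
      = #{T ∈ (range m).powerset | Q T} := by
  have hinj : Function.Injective (support : (ZMod 2)[X] → Finset ℕ) :=
    Function.LeftInverse.injective (g := fun T => ∑ i ∈ T, X ^ i) sum_X_pow_support_zmod_two
  rw [← Set.ncard_image_of_injective _ hinj, ← Set.ncard_coe_finset]
  congr 1
  ext T
  simp only [Set.mem_image, Set.mem_ofPred_eq, coe_filter, mem_powerset]
  constructor
  · rintro ⟨q, hq, rfl⟩
    exact hq
  · intro hT
    exact ⟨∑ i ∈ T, X ^ i, by rwa [support_sum_X_pow], support_sum_X_pow T⟩

end Polynomial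

namespace AdjoinRoot

lemma dvd_iff_sum_root_pow_support_eq_zero {p q : (ZMod 2)[X]} :
    p ∣ q ↔ ∑ i ∈ q.support, root p ^ i = 0 := by
  rw [← mk_eq_zero, ← aeval_eq, aeval_eq_sum_support_zmod_two]

theorem ncard_multiples_eq_card_zeroSumSets {p : (ZMod 2)[X]} [Fact (Irreducible p)]
    [Fintype (AdjoinRoot p)] [DecidableEq (AdjoinRoot p)]
    (hp : orderOf (root p) = Fintype.card (AdjoinRoot p) - 1) (t : ℕ) :
    {q : (ZMod 2)[X] | q.coeff 0 = 1 ∧ q.natDegree ≤ Fintype.card (AdjoinRoot p) - 2 ∧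
        #q.support = t ∧ p ∣ q}.ncard
      = #{S ∈ zeroSumSets (AdjoinRoot p) t | 1 ∈ S} := by
  have hn : 2 ≤ Fintype.card (AdjoinRoot p) := Fintype.one_lt_card
  rw [← card_filter_powerset_range_eq hp, ← ncard_setOf_support_zmod_two]
  congr 1
  ext q
  simp only [Set.mem_ofPred_eq, coeff_zero_eq_one_iff_zmod_two,
    natDegree_le_iff_support_subset_range, dvd_iff_sum_root_pow_support_eq_zero,
    show Fintype.card (AdjoinRoot p) - 2 + 1 = Fintype.card (AdjoinRoot p) - 1 by omega]
  tauto

end AdjoinRoot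

theorem stmt16_general (k : ℕ)
    (p : Polynomial (ZMod 2)) (hp : IsPrimitivePoly k p)
    (N : ℕ → ℕ)
    (hN : ∀ t : ℕ, N t = {q : Polynomial (ZMod 2) |
        q.coeff 0 = 1 ∧ q.natDegree ≤ 2 ^ k - 2 ∧ q.support.card = t ∧ p ∣ q}.ncard) :
    N 1 = 0 ∧ N 2 = 0 ∧
    ∀ t : ℕ, 3 ≤ t →
      ((t : ℤ) - 1) * ((t : ℤ) - 2) * (N t : ℤ)
        = ((t : ℤ) - 2) * (Nat.choose (2 ^ k - 2) (t - 2) : ℤ)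
          - ((t : ℤ) - 2) * (N (t - 1) : ℤ)
          - ((t : ℤ) - 1) * ((2 : ℤ) ^ k - (t : ℤ) + 1) * (N (t - 2) : ℤ) := by
  classical
  obtain ⟨hdeg, hirr, hord⟩ := hp
  have : Fact (Irreducible p) := ⟨hirr⟩
  have : Module.Finite (ZMod 2) (AdjoinRoot p) := (AdjoinRoot.powerBasis hirr.ne_zero).finite
  have : Fintype (AdjoinRoot p) := @Fintype.ofFinite _ (Module.finite_of_finite (ZMod 2))
  have hcard : Fintype.card (AdjoinRoot p) = 2 ^ k := by
    rw [Module.card_eq_pow_finrank (K := ZMod 2), ZMod.card,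
      (AdjoinRoot.powerBasis hirr.ne_zero).finrank, AdjoinRoot.powerBasis_dim, hdeg]
  have hNt (t : ℕ) : N t = #{S ∈ zeroSumSets (AdjoinRoot p) t | 1 ∈ S} := by
    rw [hN, ← AdjoinRoot.ncard_multiples_eq_card_zeroSumSets (hcard ▸ hord), hcard]
  refine ⟨?_, ?_, fun t ht => ?_⟩
  · rw [hNt, zeroSumSets_one, filter_empty, card_empty]
  · rw [hNt, zeroSumSets_two, filter_empty, card_empty]
  · obtain ⟨r, rfl⟩ : ∃ r, t = r + 2 := ⟨t - 2, by omega⟩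
    have hrec := card_filter_one_mem_zeroSumSets_recurrence (F := AdjoinRoot p) r
    rw [hcard] at hrec
    simp only [Nat.add_sub_cancel, show r + 2 - 1 = r + 1 by omega, hNt]
    push_cast at hrec ⊢
    linear_combination hrec

/-- Recurrence for the number `N_t` of `t`-nomial multiples (with constant
term 1 and degree at most `2^k - 2`) of a primitive polynomial of degree `k ≥ 2`:
`N₁ = N₂ = 0` and for `t ≥ 3`,
`(t-1)(t-2)·N_t = (t-2)·C(2^k-2, t-2) - (t-2)·N_{t-1} - (t-1)·(2^k - t + 1)·N_{t-2}`. -/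
theorem stmt16 (k : ℕ) (hk : 2 ≤ k)
    (p : Polynomial (ZMod 2)) (hp : IsPrimitivePoly k p)
    (N : ℕ → ℕ)
    (hN : ∀ t : ℕ, N t = {q : Polynomial (ZMod 2) |
        q.coeff 0 = 1 ∧ q.natDegree ≤ 2 ^ k - 2 ∧ q.support.card = t ∧ p ∣ q}.ncard) :
    N 1 = 0 ∧ N 2 = 0 ∧
    ∀ t : ℕ, 3 ≤ t →
      ((t : ℤ) - 1) * ((t : ℤ) - 2) * (N t : ℤ)
        = ((t : ℤ) - 2) * (Nat.choose (2 ^ k - 2) (t - 2) : ℤ)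
          - ((t : ℤ) - 2) * (N (t - 1) : ℤ)
          - ((t : ℤ) - 1) * ((2 : ℤ) ^ k - (t : ℤ) + 1) * (N (t - 2) : ℤ) :=
  stmt16_general k p hp N hN
end Field
end
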